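/- arXiv:0705.3531 — 5 statements merged into one kernel-verified Lean document; each statement's English description precedes it below -/
import Mathlib

section
/- For integers $n > d \geq 3$ with $d-1$ even, one has $2\sum_{i=0}^{(d-3)/2}\binom{n-d+i}{i} + \binom{n-d+(d-1)/2}{(d-1)/2} = \frac{n \cdot \prod_{i=1}^{n-d}\left(\frac{d-1}{2}+i\right)}{(n-d+1)!}$. (This says the multiplicity of the boundary complex of the cyclic polytope $C(n,d-1)$ equals the upper bound from the maximal shifts of its minimal free resolution when $d-1$ is even.) -/
/-!
Write `d = 2k + 1` and `m = n - d`. By the hockey-stick identity the sum is `C(m+k, m+1)`, and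
`(m+1)·C(m+k, m+1) = k·C(m+k, k)`, so the left side is `(m+2k+1)/(m+1)·C(m+k, k)`. The product is
the rising factorial `(k+m)!/k!`, so the right side is `n·(k+m)!/(k!·(m+1)!)`, the same number.
-/

open Finset Nat

theorem sum_range_add_choose' (m k : ℕ) :
    ∑ i ∈ range k, (m + i).choose i = (m + k).choose (m + 1) := by
  induction k with
  | zero => simp
  | succ k ih =>
    rw [sum_range_succ, ih, ← choose_symm_add, ← add_assoc, choose_succ_succ', add_comm]

theorem succ_mul_add_choose_succ (m k : ℕ) :
    (m + 1) * (m + k).choose (m + 1) = k * (m + k).choose k := by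
  rw [mul_comm, choose_succ_right_eq, choose_symm_add, Nat.add_sub_cancel_left, mul_comm]

theorem factorial_mul_prod_Icc_add (k m : ℕ) :
    (k ! : ℚ) * ∏ i ∈ Icc 1 m, ((k : ℚ) + i) = (k + m)! := by
  rw [← factorial_mul_ascFactorial, ascFactorial_eq_prod_range, range_eq_Ico,
    ← Ico_add_one_right_eq_Icc, ← zero_add 1, ← prod_Ico_add (fun i : ℕ => (k : ℚ) + i)]
  push_cast
  simp only [add_assoc]

theorem two_mul_sum_add_choose_add_choose (m k : ℕ) :
    2 * ∑ i ∈ range k, ((m + i).choose i : ℚ) + (m + k).choose k =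
      (m + 2 * k + 1) * (∏ i ∈ Icc 1 m, ((k : ℚ) + i)) / (m + 1)! := by
  have hsum : ∑ i ∈ range k, ((m + i).choose i : ℚ) = (m + k).choose (m + 1) := by
    exact_mod_cast sum_range_add_choose' m k
  have hrel : ((m + 1 : ℕ) : ℚ) * (m + k).choose (m + 1) = k * (m + k).choose k := by
    exact_mod_cast succ_mul_add_choose_succ m k
  have hchoose : ((m + k).choose k : ℚ) * m ! * k ! = (k + m)! := by
    rw [add_comm k m]; exact_mod_cast add_choose_mul_factorial_mul_factorial m k
  have hprod := factorial_mul_prod_Icc_add k m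
  rw [hsum, factorial_succ, eq_div_iff (by positivity)]
  push_cast at hrel ⊢
  apply mul_left_cancel₀ (show (k ! : ℚ) ≠ 0 by positivity)
  linear_combination (2 * k ! * m !) * hrel + (m + 2 * k + 1) * hchoose - (m + 2 * k + 1) * hprod

/-- For integers `n > d ≥ 3` with `d - 1` even, the multiplicity of the boundary
complex of the cyclic polytope `C(n, d-1)` equals the upper bound coming from the
maximal shifts of its minimal free resolution:
`2·∑_{i=0}^{(d-3)/2} C(n-d+i, i) + C(n-d+(d-1)/2, (d-1)/2)
  = n·∏_{i=1}^{n-d} ((d-1)/2 + i) / (n-d+1)!`. -/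
theorem cyclic_even_multiplicity_eq_upper_bound (n d : ℕ) (hd : 3 ≤ d) (hnd : d < n)
    (hev : Even (d - 1)) :
    (2 * ∑ i ∈ Finset.range ((d - 3) / 2 + 1), ((n - d + i).choose i : ℚ) +
        ((n - d + (d - 1) / 2).choose ((d - 1) / 2) : ℚ)) =
      (n : ℚ) * (∏ i ∈ Finset.Icc 1 (n - d), (((d : ℚ) - 1) / 2 + (i : ℚ))) /
        (Nat.factorial (n - d + 1) : ℚ) := by
  obtain ⟨k, hk⟩ := hev
  obtain ⟨m, rfl⟩ : ∃ m, n = m + d := ⟨n - d, by omega⟩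
  obtain rfl : d = 2 * k + 1 := by omega
  have hsum_range : (2 * k + 1 - 3) / 2 + 1 = k := by omega
  have hhalf : (2 * k + 1 - 1) / 2 = k := by omega
  have hhalf_cast : (((2 * k + 1 : ℕ) : ℚ) - 1) / 2 = k := by push_cast; ring
  rw [hsum_range, hhalf, hhalf_cast, Nat.add_sub_cancel, two_mul_sum_add_choose_add_choose]
  push_cast
  ring
end

section
/- Let $n > d \geq 2m$ with $m \geq 2$. Then $2\binom{n-d+m}{m-1} + (d-2m)\binom{n-d+m-1}{m-1} \geq \frac{n \cdot \prod_{i=1}^{n-d}(m+i-1)}{(n-d+1)!}$. -/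
/-!
Write `k = n - d` and `m = r + 1`. Both sides are multiples of `C(k + r, r) / (k + 1)`: the
product is the rising factorial `m⁽ᵏ⁾ = k! C(k + r, r)`, and
`C(k + m, m - 1) (k + 1) = (k + m) C(k + r, r)`. Comparing coefficients leaves
`n ≤ d + k ≤ 2 (k + m) + (d - 2m)(k + 1)`, which holds because the difference is
`k (d - 2m + 1) ≥ 0`.
-/

open Finset

theorem prod_Icc_natCast_add_sub_one {R : Type*} [CommRing R] (m k : ℕ) :
    ∏ i ∈ Icc 1 k, ((m : R) + i - 1) = m.ascFactorial k := by
  induction k with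
  | zero => simp
  | succ k ih =>
    rw [prod_Icc_succ_top (by omega), ih, Nat.ascFactorial_succ]
    push_cast
    ring

section Field

variable {K : Type*} [Field K] [CharZero K]

theorem ascFactorial_div_factorial_succ (r k : ℕ) :
    ((r + 1).ascFactorial k : K) / (k + 1).factorial = (k + r).choose r / (k + 1) := by
  rw [Nat.ascFactorial_eq_factorial_mul_choose, add_comm r k, Nat.choose_symm_add,
    Nat.factorial_succ]
  push_cast
  rw [mul_comm (k + 1 : K), mul_div_mul_left _ _ (by exact_mod_cast k.factorial_ne_zero)]

theorem choose_succ_eq_mul_choose (r k : ℕ) :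
    ((k + r + 1).choose r : K) = (k + r + 1) / (k + 1) * (k + r).choose r := by
  have h := Nat.choose_mul_succ_eq (k + r) r
  rw [show k + r + 1 - r = k + 1 by omega] at h
  rw [div_mul_eq_mul_div, eq_div_iff (Nat.cast_add_one_ne_zero k)]
  exact_mod_cast h.symm.trans (mul_comm _ _)

end Field

theorem lower_bound_key_inequality_general (n d m : ℕ) (hm : 2 ≤ m) (hd : 2 * m ≤ d) :
    (n : ℚ) * (∏ i ∈ Finset.Icc 1 (n - d), ((m : ℚ) + (i : ℚ) - 1)) /
        (Nat.factorial (n - d + 1) : ℚ) ≤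
      2 * ((n - d + m).choose (m - 1) : ℚ) +
        ((d : ℚ) - 2 * (m : ℚ)) * ((n - d + m - 1).choose (m - 1) : ℚ) := by
  obtain ⟨r, rfl⟩ : ∃ r, m = r + 1 := ⟨m - 1, by omega⟩
  set k := n - d
  have hn : (n : ℚ) ≤ d + k := by exact_mod_cast le_add_tsub
  have hdr : (2 * (r + 1) : ℚ) ≤ d := by exact_mod_cast hd
  have hcoeff : (n : ℚ) ≤ 2 * (k + r + 1) + (d - 2 * (r + 1)) * (k + 1) := by nlinarith
  simp only [Nat.add_sub_cancel, ← add_assoc]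
  rw [mul_div_assoc, prod_Icc_natCast_add_sub_one, ascFactorial_div_factorial_succ,
    choose_succ_eq_mul_choose]
  push_cast
  calc (n : ℚ) * ((k + r).choose r / (k + 1))
      ≤ (2 * (k + r + 1) + (d - 2 * (r + 1)) * (k + 1)) * ((k + r).choose r / (k + 1)) := by
        gcongr
    _ = _ := by field_simp

/-- Key inequality for the lower bound of the multiplicity conjecture: for
`n > d ≥ 2m`, `m ≥ 2`,
`2·C(n-d+m, m-1) + (d-2m)·C(n-d+m-1, m-1) ≥ n·∏_{i=1}^{n-d}(m+i-1)/(n-d+1)!`. -/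
theorem lower_bound_key_inequality (n d m : ℕ) (hm : 2 ≤ m) (hd : 2 * m ≤ d)
    (hnd : d < n) :
    (n : ℚ) * (∏ i ∈ Finset.Icc 1 (n - d), ((m : ℚ) + (i : ℚ) - 1)) /
        (Nat.factorial (n - d + 1) : ℚ) ≤
      2 * ((n - d + m).choose (m - 1) : ℚ) +
        ((d : ℚ) - 2 * (m : ℚ)) * ((n - d + m - 1).choose (m - 1) : ℚ) :=
  lower_bound_key_inequality_general n d m hm hd
end

section
/- Let $h_i = \binom{n-d+i-1}{i}$ for $0 \leq i \leq m-1$ and $h_i = 0$ for $m \leq i \leq d$, where $2 \leq m \leq \lfloor (d+1)/2 \rfloor$ and $n > d$. Define $h'_i = \sum_{j=0}^{i} h_j - \sum_{j=0}^{i} h_{d-j}$ for $0 \leq i \leq d-1$. Then $h'_i = \binom{n-d+i}{i}$ for $0 \leq i \leq m-2$, $h'_i = \binom{n-d+m-1}{m-1}$ for $m-1 \leq i \leq d-m$, and $h'_i = \binom{n-1-i}{d-1-i}$ for $d-m+1 \leq i \leq d-1$. In particular, the sequence $(h'_0,\ldots,h'_{d-1})$ is symmetric and unimodal. -/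
/-!
Write `P t = h₀ + ⋯ + hₜ`. Reflecting the second sum gives `h'ᵢ = P i + P (d-1-i) - P d`.
Since `h` vanishes above `m - 1`, `P` is constant from `m - 1` on, and as `d - 1 ≥ 2(m - 1)` one
of `i`, `d - 1 - i` is at least `m - 1`; hence `h'ᵢ = P s` with `s = min (min i (d-1-i)) (m-1)`,
which is `C(n - d + s, s)` by the hockey-stick identity. Everything follows, since
`s ↦ C(n - d + s, s)` is monotone.
-/

open Finset

namespace Nat

theorem sum_range_add_choose_self (a s : ℕ) :
    ∑ j ∈ range (s + 1), (a + j).choose j = (a + s + 1).choose s := by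
  rw [choose_symm_of_eq_add (show a + s + 1 = s + (a + 1) by omega),
    show a + s + 1 = s + a + 1 by omega, ← sum_range_add_choose]
  exact sum_congr rfl fun j _ => by rw [add_comm a, choose_symm_add]

theorem monotone_add_choose_self (a : ℕ) : Monotone fun s => (a + s).choose s := by
  intro s t hst
  simp only [← choose_symm_add]
  exact choose_le_choose a (by omega)

end Nat

section BoundaryHVector

variable {M : Type*}

theorem sum_range_succ_reflect_add_sum_range [AddCommMonoid M] (f : ℕ → M) {d i : ℕ}
    (hi : i ≤ d) :
    ∑ j ∈ range (i + 1), f (d - j) + ∑ j ∈ range (d - i), f j =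
      ∑ j ∈ range (d + 1), f j := by
  induction i with
  | zero => rw [sum_range_one, sum_range_succ, add_comm, Nat.sub_zero]
  | succ i ih =>
    rw [← ih (by omega), sum_range_succ (fun j => f (d - j)) (i + 1),
      show d - i = d - (i + 1) + 1 by omega, sum_range_succ f (d - (i + 1))]
    abel

theorem sum_range_succ_eq_sum_range_min_succ [AddCommMonoid M] {h : ℕ → M} {c d t : ℕ}
    (hvanish : ∀ j, c < j → j ≤ d → h j = 0) (ht : t ≤ d) :
    ∑ j ∈ range (t + 1), h j = ∑ j ∈ range (min t c + 1), h j := by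
  refine (sum_subset (range_subset_range.mpr (by omega)) fun j hj hj' => ?_).symm
  simp only [mem_range] at hj hj'
  exact hvanish j (by omega) (by omega)

/-- The `h`-vector of the boundary sphere of a ball with `h`-vector `(h₀, …, h_d)`. -/
def boundaryHVector [AddCommGroup M] (h : ℕ → M) (d i : ℕ) : M :=
  ∑ j ∈ range (i + 1), h j - ∑ j ∈ range (i + 1), h (d - j)

theorem boundaryHVector_eq_sum_range_min [AddCommGroup M] {h : ℕ → M} {c d i : ℕ}
    (hvanish : ∀ j, c < j → j ≤ d → h j = 0) (hcd : 2 * c < d) (hi : i < d) :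
    boundaryHVector h d i = ∑ j ∈ range (min (min i (d - 1 - i)) c + 1), h j := by
  have hreflect := sum_range_succ_reflect_add_sum_range h hi.le
  rw [boundaryHVector, eq_sub_of_add_eq hreflect, show d - i = d - 1 - i + 1 by omega]
  simp only [sum_range_succ_eq_sum_range_min_succ hvanish (le_refl d),
    sum_range_succ_eq_sum_range_min_succ hvanish hi.le,
    sum_range_succ_eq_sum_range_min_succ hvanish (show d - 1 - i ≤ d by omega),
    show min d c = c by omega]
  rcases le_total c i with hci | hic
  · rw [show min i c = c by omega, show min (min i (d - 1 - i)) c = min (d - 1 - i) c by omega]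
    abel
  · rw [show min (d - 1 - i) c = c by omega, show min (min i (d - 1 - i)) c = min i c by omega]
    abel

end BoundaryHVector

theorem exists_unimodal_of_eq_monotone_comp_min {α : Type*} [Preorder α] {f G : ℕ → α}
    (hG : Monotone G) {N c : ℕ} (hf : ∀ i, i ≤ N → f i = G (min (min i (N - i)) c)) :
    ∃ j, j ≤ N ∧ (∀ a b, a ≤ b → b ≤ j → f a ≤ f b) ∧
      (∀ a b, j ≤ a → a ≤ b → b ≤ N → f b ≤ f a) := by
  refine ⟨N / 2, by omega, fun a b hab hb => ?_, fun a b ha hab hb => ?_⟩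
  · rw [hf a (by omega), hf b (by omega)]
    exact hG (by omega)
  · rw [hf a (by omega), hf b hb]
    exact hG (by omega)

/-- The `h`-vector of the boundary sphere of a linear ball, computed from the `h`-vector
of the ball: with `hᵢ = C(n-d+i-1, i)` for `i ≤ m-1` and `hᵢ = 0` for `m ≤ i ≤ d`
(where `2 ≤ m ≤ ⌊(d+1)/2⌋`, `n > d`), the vector `h'ᵢ = ∑_{j≤i} hⱼ - ∑_{j≤i} h_{d-j}`
satisfies the stated piecewise formula, and is symmetric and unimodal. -/
theorem h_vector_of_boundary_of_linear_ball (n d m : ℕ) (hm : 2 ≤ m)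
    (hm' : m ≤ (d + 1) / 2) (hnd : d < n) (h h' : ℕ → ℤ)
    (hh1 : ∀ i, i ≤ m - 1 → h i = ((n - d + i - 1).choose i : ℤ))
    (hh2 : ∀ i, m ≤ i → i ≤ d → h i = 0)
    (hh' : ∀ i, h' i =
      (∑ j ∈ Finset.range (i + 1), h j) - ∑ j ∈ Finset.range (i + 1), h (d - j)) :
    (∀ i, i ≤ m - 2 → h' i = ((n - d + i).choose i : ℤ)) ∧
    (∀ i, m - 1 ≤ i → i ≤ d - m → h' i = ((n - d + m - 1).choose (m - 1) : ℤ)) ∧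
    (∀ i, d - m + 1 ≤ i → i ≤ d - 1 → h' i = ((n - 1 - i).choose (d - 1 - i) : ℤ)) ∧
    (∀ i, i ≤ d - 1 → h' i = h' (d - 1 - i)) ∧
    (∃ j, j ≤ d - 1 ∧ (∀ a b, a ≤ b → b ≤ j → h' a ≤ h' b) ∧
      (∀ a b, j ≤ a → a ≤ b → b ≤ d - 1 → h' b ≤ h' a)) := by
  have hsum : ∀ s, s ≤ m - 1 →
      ∑ j ∈ range (s + 1), h j = ((n - d + s).choose s : ℤ) := by
    intro s hs
    have hterm : ∀ j ∈ range (s + 1), h j = ((n - d - 1 + j).choose j : ℤ) := fun j hj => by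
      rw [hh1 j (by rw [mem_range] at hj; omega), show n - d + j - 1 = n - d - 1 + j by omega]
    rw [sum_congr rfl hterm, ← Nat.cast_sum, Nat.sum_range_add_choose_self,
      show n - d - 1 + s + 1 = n - d + s by omega]
  have key : ∀ i, i ≤ d - 1 → h' i = ((n - d + min (min i (d - 1 - i)) (m - 1)).choose
      (min (min i (d - 1 - i)) (m - 1)) : ℤ) := fun i hi => by
    rw [hh' i, ← boundaryHVector, boundaryHVector_eq_sum_range_min (c := m - 1)
      (fun j hj => hh2 j (by omega)) (by omega) (by omega), hsum _ (by omega)]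
  refine ⟨fun i hi => ?_, fun i hi hi' => ?_, fun i hi hi' => ?_, fun i hi => ?_,
    exists_unimodal_of_eq_monotone_comp_min
      (Nat.mono_cast.comp (Nat.monotone_add_choose_self (n - d))) key⟩ <;>
  rw [key i (by omega)]
  · congr 2 <;> omega
  · congr 2 <;> omega
  · congr 2 <;> omega
  · rw [key (d - 1 - i) (by omega)]
    congr 2 <;> omega
end

section
/- Let $1 \leq r \leq m-1 \leq n-1$. There exists a non-flippable facet of $\Delta_r$ (the simplicial complex of the initial ideal of the $(r+1)$-minors of a generic $m\times n$ matrix) with exactly $t$ corners if and only if $r \leq t \leq r(m-r)$. -/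
open Finset

section Defs

variable {V : Type*} [Fintype V] [DecidableEq V]

/-- An (abstract) simplicial complex on the vertex type `V`, with every element of `V`
a vertex. -/
def IsComplexOn (Δ : Set (Finset V)) : Prop :=
  (∀ v : V, {v} ∈ Δ) ∧ ∀ F ∈ Δ, ∀ G, G ⊆ F → G ∈ Δ

/-- The number of faces of `Δ` of cardinality `i` (i.e. of dimension `i - 1`). -/
noncomputable def faceCount (Δ : Set (Finset V)) (i : ℕ) : ℕ :=
  {F ∈ Δ | F.card = i}.ncard

/-- The geometric realization of `Δ`, inside `ℝ^V`. -/
def realization (Δ : Set (Finset V)) : Set (EuclideanSpace ℝ V) :=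
  { f | (∀ v, 0 ≤ f v) ∧ (∑ v, f v) = 1 ∧
      ∃ F ∈ Δ, (∀ v, v ∈ F ↔ f v ≠ 0) }

/-- `Δ` is a `k`-dimensional ball: its geometric realization is homeomorphic to the
closed unit ball of `ℝ^k`. -/
def IsBall (k : ℕ) (Δ : Set (Finset V)) : Prop :=
  Nonempty (realization Δ ≃ₜ (Metric.closedBall (0 : EuclideanSpace ℝ (Fin k)) 1))

/-- `Δ` is a `k`-dimensional sphere: its geometric realization is homeomorphic to the
unit sphere of `ℝ^(k+1)`. -/
def IsSphere (k : ℕ) (Δ : Set (Finset V)) : Prop :=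
  Nonempty (realization Δ ≃ₜ (Metric.sphere (0 : EuclideanSpace ℝ (Fin (k+1))) 1))

/-- `Δ` is pure with facets of cardinality `d` and shellable, as witnessed by a shelling
order `L` on its facets. -/
def IsShellable (d : ℕ) (Δ : Set (Finset V)) : Prop :=
  ∃ L : List (Finset V), L.Nodup ∧
    (∀ F, F ∈ L ↔ (F ∈ Δ ∧ F.card = d)) ∧
    (∀ F ∈ Δ, ∃ G ∈ L, F ⊆ G) ∧
    ∀ (i j : ℕ) (hi : i < L.length) (hj : j < i),
      ∃ k, ∃ hk : k < i, ∃ v ∈ L[i], (L[k]'(by omega)) ∩ L[i] = (L[i]).erase v ∧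
        (L[j]'(by omega)) ∩ L[i] ⊆ (L[k]'(by omega)) ∩ L[i]

/-- The boundary complex of a pure `(d-1)`-dimensional complex `Δ` (facets of
cardinality `d`): faces contained in some face of cardinality `d - 1` which lies in
exactly one facet. -/
def boundaryComplex (d : ℕ) (Δ : Set (Finset V)) : Set (Finset V) :=
  { F | F ∈ Δ ∧ ∃ F' ∈ Δ, F ⊆ F' ∧ F'.card = d - 1 ∧
      ∃! G, G ∈ Δ ∧ G.card = d ∧ F' ⊆ G }

variable (K : Type*) [Field K]

/-- The Stanley–Reisner ideal of `Δ` in `K[x_v : v ∈ V]`. -/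
noncomputable def SRideal (Δ : Set (Finset V)) : Ideal (MvPolynomial V K) :=
  Ideal.span { m | ∃ F : Finset V, F ∉ Δ ∧ m = ∏ v ∈ F, MvPolynomial.X v }

/-- A minimal graded free resolution of `S/I` over `S = K[x_v : v ∈ V]`, recorded by
its Betti data: ranks `b i`, shifts `deg i`, and differentials `d i` given as
`S`-linear maps whose matrix entries are homogeneous of the appropriate degrees and
lie in the graded maximal ideal. -/
structure MinFreeRes (I : Ideal (MvPolynomial V K)) where
  b : ℕ → ℕ
  deg : (i : ℕ) → Fin (b i) → ℕ
  d : (i : ℕ) → ((Fin (b (i+1)) → MvPolynomial V K) →ₗ[MvPolynomial V K]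
        (Fin (b i) → MvPolynomial V K))
  aug : (Fin (b 0) → MvPolynomial V K) →ₗ[MvPolynomial V K] (MvPolynomial V K ⧸ I)
  b_zero : b 0 = 1
  deg_zero : ∀ k, deg 0 k = 0
  finite_length : ∃ p, ∀ i, p < i → b i = 0
  homogeneous : ∀ i l k, ((d i (Pi.single l 1)) k).IsHomogeneous (deg (i+1) l - deg i k)
  minimal : ∀ i l k, MvPolynomial.constantCoeff ((d i (Pi.single l 1)) k) = 0
  aug_surjective : Function.Surjective aug
  exact_zero : Function.Exact (d 0) aug
  exact : ∀ i, Function.Exact (d (i+1)) (d i)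

/-- The minimal shift `m_i` of a resolution. -/
noncomputable def MinFreeRes.minShift {I : Ideal (MvPolynomial V K)}
    (R : MinFreeRes K I) (i : ℕ) : ℕ := sInf (Set.range (R.deg i))

/-- The maximal shift `M_i` of a resolution. -/
noncomputable def MinFreeRes.maxShift {I : Ideal (MvPolynomial V K)}
    (R : MinFreeRes K I) (i : ℕ) : ℕ := sSup (Set.range (R.deg i))

/-- `I` has a linear resolution: it is generated in some single degree `m` and all
shifts in its minimal free resolution satisfy `Mᵢ = m + i` (i.e. the `i`-th free module
in the resolution of `S/I` is generated in degree `m + i - 1`). -/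
def HasLinearResolution (I : Ideal (MvPolynomial V K)) : Prop :=
  ∃ m : ℕ, ∀ (R : MinFreeRes K I) (i : ℕ) (k : Fin (R.b (i+1))), R.deg (i+1) k = m + i

end Defs

section Paths

/-- The lattice points of the `m × n` grid associated to a set of matrix positions,
using 1-based integer coordinates. -/
def encGrid {m n : ℕ} (G : Finset (Fin m × Fin n)) : Finset (ℤ × ℤ) :=
  G.image (fun v => ((v.1 : ℤ) + 1, (v.2 : ℤ) + 1))

/-- `C` is a path (saturated chain) in the `m × n` grid from `(a, n)` to `(m, b)`, i.e.
a staircase walk from `(m, b)` to `(a, n)` whose steps decrease the row index or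
increase the column index by one. -/
def IsPathE (m n : ℕ) (C : Finset (ℤ × ℤ)) (a b : ℤ) : Prop :=
  ∃ (L : ℕ) (f : ℕ → ℤ × ℤ), f 0 = ((m : ℤ), b) ∧ f L = (a, (n : ℤ)) ∧
    (∀ k, k < L →
      ((f (k+1)).1 = (f k).1 - 1 ∧ (f (k+1)).2 = (f k).2) ∨
      ((f (k+1)).1 = (f k).1 ∧ (f (k+1)).2 = (f k).2 + 1)) ∧
    C = (Finset.range (L + 1)).image f

/-- `C : Fin r → _` is a family of pairwise disjoint paths, `C i` running from
`(a i, n)` to `(m, b i)`; these are exactly the (decompositions of) facets of the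
simplicial complex `Δ_σ` of the initial ideal of the determinantal ideal `I_σ`,
`σ = [a₁,…,a_r | b₁,…,b_r]`. -/
def IsFacetDecomp (m n r : ℕ) (a b : Fin r → ℤ) (C : Fin r → Finset (ℤ × ℤ)) : Prop :=
  (∀ i, IsPathE m n (C i) (a i) (b i)) ∧
    ∀ i j, i ≠ j → Disjoint (C i) (C j)

/-- The simplicial complex `Δ_σ` on the vertex set `[m] × [n]`: its faces are the
subsets of unions of `r` pairwise disjoint paths from `(aᵢ, n)` to `(m, bᵢ)`. -/
def DeltaSigma (m n r : ℕ) (a b : Fin r → ℤ) : Set (Finset (Fin m × Fin n)) :=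
  { G | ∃ C : Fin r → Finset (ℤ × ℤ), IsFacetDecomp m n r a b C ∧
      encGrid G ⊆ Finset.univ.biUnion C }

/-- The corners of a path `C`: points `(i,j) ∈ C` with `(i-1,j) ∈ C` and
`(i,j-1) ∈ C`. -/
def pathCorners (C : Finset (ℤ × ℤ)) : Finset (ℤ × ℤ) :=
  C.filter (fun v => (v.1 - 1, v.2) ∈ C ∧ (v.1, v.2 - 1) ∈ C)

/-- The set `𝒞(F)` of corners of the paths of a facet decomposition `C`. -/
def cornersOf {r : ℕ} (C : Fin r → Finset (ℤ × ℤ)) : Finset (ℤ × ℤ) :=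
  Finset.univ.biUnion (fun i => pathCorners (C i))

/-- A facet (decomposition) `C` of `Δ_σ` is non-flippable if the only facet whose
corner set contains `𝒞(F)` is `F` itself. -/
def NonFlippable (m n r : ℕ) (a b : Fin r → ℤ) (C : Fin r → Finset (ℤ × ℤ)) : Prop :=
  ∀ C' : Fin r → Finset (ℤ × ℤ), IsFacetDecomp m n r a b C' →
    cornersOf C ⊆ cornersOf C' →
    Finset.univ.biUnion C' = Finset.univ.biUnion C

end Paths

/-!
A path of a facet of `Δ_r` without corners is a hook: up its column, then along its top row.
If the last such path is the `i`-th one (from `(i, n)` to `(m, i)`), the cells of column `i + 1`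
above a corner of path `i + 1` are free, so the vertical leg of the hook can be moved one column
to the right there. This gives a different facet whose corners contain the old ones; hence every
path of a non-flippable facet has a corner, and `r ≤ t`. The corners of a path lie in pairwise
distinct rows, and since the later paths need room below it, these rows lie in an interval of
length `m - r`; so `t ≤ r (m - r)`.

Conversely, write `t = s₁ + ⋯ + s_r` with `m - r ≥ s₁ ≥ ⋯ ≥ s_r ≥ 1` and let the `i`-th path
climb its column to row `m - r + i`, make `s_i` corners along an antidiagonal and climb column
`n - r + i`. A facet containing all these corners agrees with this one path by path, from the
last to the first: the lowest corner of path `i` fits on no earlier path and the higher ones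
follow by disjointness, a further corner of path `i` would meet a later path, and a path is
squeezed between its corners.
-/

structure PathWalk (m n : ℕ) (C : Finset (ℤ × ℤ)) (a b : ℤ) where
  len : ℕ
  f : ℕ → ℤ × ℤ
  f_zero : f 0 = ((m : ℤ), b)
  f_len : f len = (a, (n : ℤ))
  step : ∀ k, k < len →
      ((f (k + 1)).1 = (f k).1 - 1 ∧ (f (k + 1)).2 = (f k).2) ∨
      ((f (k + 1)).1 = (f k).1 ∧ (f (k + 1)).2 = (f k).2 + 1)
  eq_image : C = (range (len + 1)).image f

noncomputable def IsPathE.walk {m n : ℕ} {C : Finset (ℤ × ℤ)} {a b : ℤ}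
    (h : IsPathE m n C a b) : PathWalk m n C a b :=
  Classical.choice <| by
    obtain ⟨L, f, h0, hL, hstep, hC⟩ := h
    exact ⟨⟨L, f, h0, hL, hstep, hC⟩⟩

namespace PathWalk

variable {m n : ℕ} {C : Finset (ℤ × ℤ)} {a b : ℤ} (W : PathWalk m n C a b)

theorem snd_sub_fst {k : ℕ} (hk : k ≤ W.len) : (W.f k).2 - (W.f k).1 = k + b - m := by
  induction k with
  | zero => simp [W.f_zero]
  | succ k ih =>
    have := ih (by omega)
    rcases W.step k (by omega) with h | h <;> push_cast <;> omega

theorem fst_le_and_snd_le {k l : ℕ} (hkl : k ≤ l) (hl : l ≤ W.len) :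
    (W.f l).1 ≤ (W.f k).1 ∧ (W.f k).2 ≤ (W.f l).2 := by
  induction l, hkl using Nat.le_induction with
  | base => exact ⟨le_rfl, le_rfl⟩
  | succ l hkl ih =>
    have := ih (by omega)
    rcases W.step l (by omega) with h | h <;> omega

theorem len_eq : (W.len : ℤ) = m + n - a - b := by
  have := W.snd_sub_fst le_rfl
  rw [W.f_len] at this
  simp only at this
  omega

theorem mem_iff {v : ℤ × ℤ} : v ∈ C ↔ ∃ k ≤ W.len, W.f k = v := by
  simp [W.eq_image]

theorem exists_index {x y : ℤ} (h : (x, y) ∈ C) :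
    ∃ k ≤ W.len, W.f k = (x, y) ∧ (k : ℤ) = y - x + m - b := by
  obtain ⟨k, hk, hf⟩ := W.mem_iff.1 h
  have := W.snd_sub_fst hk
  rw [hf] at this
  exact ⟨k, hk, hf, by simp only at this; omega⟩

end PathWalk

namespace IsPathE

variable {m n : ℕ} {C : Finset (ℤ × ℤ)} {a b : ℤ} (h : IsPathE m n C a b)
include h

theorem card_eq : (C.card : ℤ) = m + n - a - b + 1 := by
  have W := h.walk
  rw [W.eq_image, card_image_of_injOn, card_range]
  · push_cast
    rw [W.len_eq]
  · intro k hk l hl hkl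
    simp only [coe_range, Set.mem_Iio] at hk hl
    have h1 := W.snd_sub_fst (k := k) (by omega)
    have h2 := W.snd_sub_fst (k := l) (by omega)
    rw [hkl] at h1
    omega

theorem eq_of_subset {C' : Finset (ℤ × ℤ)} (h' : IsPathE m n C' a b) (hsub : C ⊆ C') :
    C = C' :=
  eq_of_subset_of_card_le hsub (by have := h.card_eq; have := h'.card_eq; omega)

theorem start_mem : ((m : ℤ), b) ∈ C := h.walk.mem_iff.2 ⟨0, Nat.zero_le _, h.walk.f_zero⟩

theorem end_mem : (a, (n : ℤ)) ∈ C := h.walk.mem_iff.2 ⟨_, le_rfl, h.walk.f_len⟩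

theorem bounds {x y : ℤ} (hv : (x, y) ∈ C) : a ≤ x ∧ x ≤ m ∧ b ≤ y ∧ y ≤ n := by
  have W := h.walk
  obtain ⟨k, hk, hf, -⟩ := W.exists_index hv
  have h1 := W.fst_le_and_snd_le (Nat.zero_le k) hk
  have h2 := W.fst_le_and_snd_le hk le_rfl
  rw [W.f_zero, hf] at h1
  rw [W.f_len, hf] at h2
  exact ⟨h2.1, h1.1, h1.2, h2.2⟩

theorem snd_le_of_fst_lt {x y x' y' : ℤ} (hv : (x, y) ∈ C) (hv' : (x', y') ∈ C)
    (hx : x < x') : y' ≤ y := by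
  have W := h.walk
  obtain ⟨k, hk, hf, -⟩ := W.exists_index hv
  obtain ⟨k', hk', hf', -⟩ := W.exists_index hv'
  rcases le_total k k' with hkk | hkk
  · have := W.fst_le_and_snd_le hkk hk'
    rw [hf, hf'] at this
    simp only at this
    omega
  · have := W.fst_le_and_snd_le hkk hk
    rw [hf, hf'] at this
    exact this.2

theorem eq_of_snd_sub_fst_eq {x y x' y' : ℤ} (hv : (x, y) ∈ C) (hv' : (x', y') ∈ C)
    (hd : y - x = y' - x') : x = x' ∧ y = y' := by
  have W := h.walk
  obtain ⟨k, -, hf, hk⟩ := W.exists_index hv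
  obtain ⟨k', -, hf', hk'⟩ := W.exists_index hv'
  obtain rfl : k = k' := by omega
  rw [hf] at hf'
  exact Prod.ext_iff.1 hf'

theorem mem_row_of_mem_of_mem {x y₁ y₂ y : ℤ} (h₁ : (x, y₁) ∈ C)
    (h₂ : (x, y₂) ∈ C) (hy₁ : y₁ ≤ y) (hy₂ : y ≤ y₂) : (x, y) ∈ C := by
  have W := h.walk
  obtain ⟨k₁, hk₁, hf₁, hi₁⟩ := W.exists_index h₁
  obtain ⟨k₂, hk₂, hf₂, hi₂⟩ := W.exists_index h₂
  set k := k₁ + (y - y₁).toNat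
  have hm₁ := W.fst_le_and_snd_le (k := k₁) (l := k) (by omega) (by omega)
  have hm₂ := W.fst_le_and_snd_le (k := k) (l := k₂) (by omega) hk₂
  have hd := W.snd_sub_fst (k := k) (by omega)
  rw [hf₁] at hm₁
  rw [hf₂] at hm₂
  simp only at hm₁ hm₂
  exact W.mem_iff.2 ⟨k, by omega, Prod.ext (by omega) (by omega)⟩

theorem prev_mem {x y : ℤ} (hv : (x, y) ∈ C) (hne : (x, y) ≠ ((m : ℤ), b)) :
    (x + 1, y) ∈ C ∨ (x, y - 1) ∈ C := by
  have W := h.walk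
  obtain ⟨k, hk, hf, -⟩ := W.exists_index hv
  obtain ⟨k, rfl⟩ : ∃ j, k = j + 1 := Nat.exists_eq_succ_of_ne_zero <| by
    rintro rfl
    exact hne (hf.symm.trans W.f_zero)
  have hmem := W.mem_iff.2 ⟨k, by omega, rfl⟩
  rcases W.step k (by omega) with hs | hs <;> rw [hf] at hs
  · left; convert hmem using 1; ext <;> simp only <;> omega
  · right; convert hmem using 1; ext <;> simp only <;> omega

theorem next_mem {x y : ℤ} (hv : (x, y) ∈ C) (hne : (x, y) ≠ (a, (n : ℤ))) :
    (x - 1, y) ∈ C ∨ (x, y + 1) ∈ C := by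
  have W := h.walk
  obtain ⟨k, hk, hf, -⟩ := W.exists_index hv
  have hkL : k < W.len := lt_of_le_of_ne hk <| by
    rintro rfl
    exact hne (hf.symm.trans W.f_len)
  have hmem := W.mem_iff.2 ⟨k + 1, hkL, rfl⟩
  rcases W.step k hkL with hs | hs <;> rw [hf] at hs
  · left; convert hmem using 1; ext <;> simp only <;> omega
  · right; convert hmem using 1; ext <;> simp only <;> omega

theorem exists_entry {x y : ℤ} (hx : x < m) (hv : (x, y) ∈ C) :
    ∃ y₀ ≤ y, (x, y₀) ∈ C ∧ (x + 1, y₀) ∈ C := by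
  induction y, (h.bounds hv).2.2.1 using Int.leInduction with
  | base =>
    rcases h.prev_mem hv (by simp only [ne_eq, Prod.mk.injEq]; omega) with hu | hl
    · exact ⟨b, le_rfl, hv, hu⟩
    · have := (h.bounds hl).2.2.1; omega
  | succ y _ ih =>
    rcases h.prev_mem hv (by simp only [ne_eq, Prod.mk.injEq]; omega) with hu | hl
    · exact ⟨y + 1, le_rfl, hv, hu⟩
    · obtain ⟨y₀, hy₀, hm⟩ := ih (by simpa using hl)
      exact ⟨y₀, by omega, hm⟩

theorem exists_exit {x y : ℤ} (hx : a < x) (hv : (x, y) ∈ C) :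
    ∃ y₁ ≥ y, (x, y₁) ∈ C ∧ (x - 1, y₁) ∈ C := by
  induction y, (h.bounds hv).2.2.2 using Int.leInductionDown with
  | base =>
    rcases h.next_mem hv (by simp only [ne_eq, Prod.mk.injEq]; omega) with hu | hr
    · exact ⟨n, le_rfl, hv, hu⟩
    · have := (h.bounds hr).2.2.2; omega
  | pred y _ ih =>
    rcases h.next_mem hv (by simp only [ne_eq, Prod.mk.injEq]; omega) with hu | hr
    · exact ⟨y - 1, le_rfl, hv, hu⟩
    · obtain ⟨y₁, hy₁, hm⟩ := ih (by simpa using hr)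
      exact ⟨y₁, by omega, hm⟩

theorem exists_mem_row {x : ℤ} (hax : a ≤ x) (hxm : x ≤ m) : ∃ y, (x, y) ∈ C := by
  induction x, hxm using Int.leInductionDown with
  | base => exact ⟨b, h.start_mem⟩
  | pred x _ ih =>
    obtain ⟨y, hy⟩ := ih (by omega)
    obtain ⟨y₁, -, -, hy₁⟩ := h.exists_exit (by omega) hy
    exact ⟨y₁, hy₁⟩

end IsPathE

theorem mem_pathCorners {C : Finset (ℤ × ℤ)} {x y : ℤ} :
    (x, y) ∈ pathCorners C ↔ (x, y) ∈ C ∧ (x - 1, y) ∈ C ∧ (x, y - 1) ∈ C := by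
  simp [pathCorners]

theorem pathCorners_subset (C : Finset (ℤ × ℤ)) : pathCorners C ⊆ C := filter_subset _ _

namespace IsPathE

variable {m n : ℕ} {C : Finset (ℤ × ℤ)} {a b : ℤ} (h : IsPathE m n C a b)
include h

theorem corner_bounds {x y : ℤ} (hc : (x, y) ∈ pathCorners C) :
    a + 1 ≤ x ∧ x ≤ m ∧ b + 1 ≤ y ∧ y ≤ n := by
  obtain ⟨h₁, h₂, h₃⟩ := mem_pathCorners.1 hc
  have := h.bounds h₁; have := h.bounds h₂; have := h.bounds h₃
  omega

theorem corner_snd_eq {x y y' : ℤ} (hc : (x, y) ∈ pathCorners C)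
    (hc' : (x, y') ∈ pathCorners C) : y = y' := by
  rw [mem_pathCorners] at hc hc'
  have := h.snd_le_of_fst_lt hc.2.1 hc'.1 (by omega)
  have := h.snd_le_of_fst_lt hc'.2.1 hc.1 (by omega)
  omega

theorem corner_snd_lt_of_fst_lt {x₁ y₁ x₂ y₂ : ℤ} (hc₁ : (x₁, y₁) ∈ pathCorners C)
    (hc₂ : (x₂, y₂) ∈ pathCorners C) (hx : x₂ < x₁) : y₁ < y₂ := by
  rw [mem_pathCorners] at hc₁ hc₂
  have := h.snd_le_of_fst_lt hc₂.2.2 hc₁.1 hx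
  omega

theorem corner_snd_le_of_fst_lt {xc yc x y : ℤ} (hc : (xc, yc) ∈ pathCorners C)
    (hv : (x, y) ∈ C) (hx : x < xc) : yc ≤ y := by
  rw [mem_pathCorners] at hc
  rcases (by omega : x = xc - 1 ∨ x < xc - 1) with rfl | hx'
  · by_contra hlt
    have := h.snd_le_of_fst_lt hv hc.2.2 (by omega)
    have := h.eq_of_snd_sub_fst_eq hv hc.1 (by omega)
    omega
  · have := h.snd_le_of_fst_lt hv hc.2.1 hx'
    omega

theorem exists_corner_ge {x y : ℤ} (hv : (x, y) ∈ C) (hx : a < x) (hy : b < y) :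
    ∃ xc yc, (xc, yc) ∈ pathCorners C ∧ x ≤ xc ∧ y ≤ yc := by
  induction x, (h.bounds hv).2.1 using Int.leInductionDown generalizing y with
  | base =>
    obtain ⟨y₁, hy₁, hm₁, hm₂⟩ := h.exists_exit hx hv
    refine ⟨m, y₁, mem_pathCorners.2 ⟨hm₁, hm₂, ?_⟩, le_rfl, hy₁⟩
    exact h.mem_row_of_mem_of_mem h.start_mem hm₁ (by omega) (by omega)
  | pred x _ ih =>
    rcases h.prev_mem hv (by simp only [ne_eq, Prod.mk.injEq]; omega) with hd | hl
    · obtain ⟨xc, yc, hc, hxc, hyc⟩ := ih (by simpa using hd) (by omega) hy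
      exact ⟨xc, yc, hc, by omega, hyc⟩
    · obtain ⟨y₁, hy₁, hm₁, hm₂⟩ := h.exists_exit hx hv
      refine ⟨x - 1, y₁, mem_pathCorners.2 ⟨hm₁, hm₂, ?_⟩, le_rfl, hy₁⟩
      exact h.mem_row_of_mem_of_mem hl hm₁ (by omega) (by omega)

theorem snd_eq_of_pathCorners_eq_empty (hnc : pathCorners C = ∅) {x y : ℤ}
    (hv : (x, y) ∈ C) (hx : a < x) : y = b := by
  by_contra hne
  obtain ⟨xc, yc, hc, -⟩ := h.exists_corner_ge hv hx (by have := h.bounds hv; omega)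
  simp [hnc] at hc

theorem mem_col_of_pathCorners_eq_empty (hnc : pathCorners C = ∅) {x : ℤ} (hax : a ≤ x)
    (hxm : x ≤ m) : (x, b) ∈ C := by
  induction x, hxm using Int.leInductionDown with
  | base => exact h.start_mem
  | pred x _ ih =>
    have hv := ih (by omega)
    obtain ⟨y₁, -, hm₁, hm₂⟩ := h.exists_exit (by omega) hv
    rwa [← h.snd_eq_of_pathCorners_eq_empty hnc hm₁ (by omega)]

theorem mem_iff_of_pathCorners_eq_empty (hnc : pathCorners C = ∅) {x y : ℤ} :
    (x, y) ∈ C ↔ (a ≤ x ∧ x ≤ m ∧ y = b) ∨ (x = a ∧ b ≤ y ∧ y ≤ n) := by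
  constructor
  · intro hv
    have := h.bounds hv
    rcases eq_or_lt_of_le this.1 with rfl | hx
    · exact Or.inr ⟨rfl, this.2.2⟩
    · exact Or.inl ⟨this.1, this.2.1, h.snd_eq_of_pathCorners_eq_empty hnc hv hx⟩
  · rintro (⟨hax, hxm, rfl⟩ | ⟨rfl, hby, hyn⟩)
    · exact h.mem_col_of_pathCorners_eq_empty hnc hax hxm
    · have hab := h.mem_col_of_pathCorners_eq_empty hnc le_rfl (h.bounds h.end_mem).2.1
      exact h.mem_row_of_mem_of_mem hab h.end_mem hby hyn

end IsPathE

-- The path whose row `x` consists of the columns `w (x + 1), …, w x`.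
noncomputable def profilePath (m n : ℕ) (a b : ℤ) (w : ℤ → ℤ) : Finset (ℤ × ℤ) :=
  (Icc a (m : ℤ) ×ˢ Icc b (n : ℤ)).filter (fun v => w (v.1 + 1) ≤ v.2 ∧ v.2 ≤ w v.1)

theorem bounds_of_mem_profilePath {m n : ℕ} {a b x y : ℤ} {w : ℤ → ℤ}
    (hv : (x, y) ∈ profilePath m n a b w) : a ≤ x ∧ x ≤ m ∧ b ≤ y ∧ y ≤ n := by
  simp only [profilePath, mem_filter, mem_product, mem_Icc] at hv
  exact ⟨hv.1.1.1, hv.1.1.2, hv.1.2.1, hv.1.2.2⟩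

structure IsProfile (m n : ℕ) (a b : ℤ) (w : ℤ → ℤ) : Prop where
  le : a ≤ m
  eq_left : w a = n
  eq_right : w (m + 1) = b
  antitoneOn : AntitoneOn w (Set.Icc a (m + 1))

def profileStep (w : ℤ → ℤ) (v : ℤ × ℤ) : ℤ × ℤ :=
  if v.2 < w v.1 then (v.1, v.2 + 1) else (v.1 - 1, v.2)

def profileWalk (m : ℕ) (b : ℤ) (w : ℤ → ℤ) (k : ℕ) : ℤ × ℤ :=
  (profileStep w)^[k] ((m : ℤ), b)

theorem profileWalk_succ (m : ℕ) (b : ℤ) (w : ℤ → ℤ) (k : ℕ) :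
    profileWalk m b w (k + 1) = profileStep w (profileWalk m b w k) :=
  Function.iterate_succ_apply' _ _ _

theorem snd_sub_fst_profileWalk (m : ℕ) (b : ℤ) (w : ℤ → ℤ) (k : ℕ) :
    (profileWalk m b w k).2 - (profileWalk m b w k).1 = k + b - m := by
  induction k with
  | zero => simp [profileWalk]
  | succ k ih =>
    rw [profileWalk_succ, profileStep]
    split_ifs <;> simp only <;> push_cast <;> omega

namespace IsProfile

variable {m n : ℕ} {a b : ℤ} {w : ℤ → ℤ} (H : IsProfile m n a b w)
include H

theorem apply_le_apply {x x' : ℤ} (hax : a ≤ x) (hxx' : x ≤ x') (hx'm : x' ≤ m + 1) :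
    w x' ≤ w x :=
  H.antitoneOn (by simp only [Set.mem_Icc]; omega) (by simp only [Set.mem_Icc]; omega) hxx'

theorem mem_iff {x y : ℤ} :
    (x, y) ∈ profilePath m n a b w ↔ a ≤ x ∧ x ≤ m ∧ w (x + 1) ≤ y ∧ y ≤ w x := by
  simp only [profilePath, mem_filter, mem_product, mem_Icc]
  constructor
  · rintro ⟨⟨⟨h₁, h₂⟩, -⟩, h₃, h₄⟩
    exact ⟨h₁, h₂, h₃, h₄⟩
  · rintro ⟨h₁, h₂, h₃, h₄⟩
    have := H.apply_le_apply (x := x + 1) (x' := m + 1) (by omega) (by omega) le_rfl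
    have := H.apply_le_apply (x := a) (x' := x) le_rfl h₁ (by omega)
    have := H.eq_left; have := H.eq_right
    exact ⟨⟨⟨h₁, h₂⟩, by omega, by omega⟩, h₃, h₄⟩

theorem eq_of_snd_sub_fst_eq {x y x' y' : ℤ} (hv : (x, y) ∈ profilePath m n a b w)
    (hv' : (x', y') ∈ profilePath m n a b w) (hd : y - x = y' - x') : x = x' := by
  rw [H.mem_iff] at hv hv'
  by_contra hne
  rcases lt_or_gt_of_ne hne with hx | hx
  · have := H.apply_le_apply (x := x + 1) (x' := x') (by omega) (by omega) (by omega)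
    omega
  · have := H.apply_le_apply (x := x' + 1) (x' := x) (by omega) (by omega) (by omega)
    omega

theorem profileStep_mem {v : ℤ × ℤ} (hv : v ∈ profilePath m n a b w)
    (hne : v ≠ (a, (n : ℤ))) : profileStep w v ∈ profilePath m n a b w := by
  obtain ⟨x, y⟩ := v
  rw [H.mem_iff] at hv
  unfold profileStep
  dsimp only
  split_ifs with hy <;> rw [H.mem_iff]
  · exact ⟨hv.1, hv.2.1, by omega, by omega⟩
  · have hax : a < x := lt_of_le_of_ne hv.1 <| by
      rintro rfl
      exact hne (by rw [show y = n by have := H.eq_left; omega])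
    have := H.apply_le_apply (x := x - 1) (x' := x) (by omega) (by omega) (by omega)
    exact ⟨by omega, by omega, by rw [sub_add_cancel]; omega, by omega⟩

theorem b_le_n : b ≤ n := by
  have := H.apply_le_apply (x := a) (x' := m + 1) le_rfl (by have := H.le; omega) le_rfl
  have := H.eq_left; have := H.eq_right; omega

theorem profileWalk_mem {k : ℕ} (hk : (k : ℤ) ≤ m + n - a - b) :
    profileWalk m b w k ∈ profilePath m n a b w := by
  induction k with
  | zero =>
    have := H.apply_le_apply H.le (by omega) le_rfl
    exact H.mem_iff.2 ⟨H.le, le_rfl, H.eq_right.le, by rwa [H.eq_right] at this⟩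
  | succ k ih =>
    rw [profileWalk_succ]
    refine H.profileStep_mem (ih (by omega)) fun he => ?_
    have := snd_sub_fst_profileWalk m b w k
    rw [he] at this
    simp only at this
    omega

theorem profileWalk_eq {k : ℕ} (hk : (k : ℤ) ≤ m + n - a - b) {v : ℤ × ℤ}
    (hv : v ∈ profilePath m n a b w) (hd : v.2 - v.1 = k + b - m) : profileWalk m b w k = v := by
  have hdk := snd_sub_fst_profileWalk m b w k
  have : (profileWalk m b w k).1 = v.1 :=
    H.eq_of_snd_sub_fst_eq (H.profileWalk_mem hk) hv (hdk.trans hd.symm)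
  exact Prod.ext this (by omega)

theorem isPathE : IsPathE m n (profilePath m n a b w) a b := by
  have hL : (((m : ℤ) + n - a - b).toNat : ℤ) = m + n - a - b := by
    have := H.le; have := H.b_le_n; omega
  have hend : (a, (n : ℤ)) ∈ profilePath m n a b w := by
    have := H.apply_le_apply (x' := a + 1) le_rfl (by omega) (by have := H.le; omega)
    rw [H.eq_left] at this
    exact H.mem_iff.2 ⟨le_rfl, H.le, this, H.eq_left.ge⟩
  refine ⟨((m : ℤ) + n - a - b).toNat, profileWalk m b w, rfl,
    H.profileWalk_eq hL.le hend (by simp only; omega), fun k _ => ?_, ?_⟩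
  · rw [profileWalk_succ, profileStep]
    split_ifs
    · exact Or.inr ⟨rfl, rfl⟩
    · exact Or.inl ⟨rfl, rfl⟩
  · ext ⟨x, y⟩
    simp only [mem_image, mem_range]
    constructor
    · intro hv
      have := bounds_of_mem_profilePath hv
      exact ⟨(y - x + m - b).toNat, by omega,
        H.profileWalk_eq (by omega) hv (by simp only; omega)⟩
    · rintro ⟨k, hk, hkv⟩
      exact hkv ▸ H.profileWalk_mem (by omega)

end IsProfile

theorem cornersOf_subset_update {r : ℕ} {C : Fin r → Finset (ℤ × ℤ)} {i : Fin r}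
    (hi : pathCorners (C i) = ∅) (P : Finset (ℤ × ℤ)) :
    cornersOf C ⊆ cornersOf (Function.update C i P) := by
  intro v hv
  simp only [cornersOf, mem_biUnion, mem_univ, true_and] at hv ⊢
  obtain ⟨j, hj⟩ := hv
  rcases eq_or_ne j i with rfl | hji
  · simp [hi] at hj
  · exact ⟨j, by rwa [Function.update_of_ne hji]⟩

-- The hook in column `c`, with its vertical leg moved to column `c + 1` in rows `c + 1, …, R - 1`.
def flipProfile (n : ℕ) (c R : ℤ) (x : ℤ) : ℤ :=
  if x ≤ c then n else if x < R then c + 1 else c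

theorem isProfile_flipProfile {m n : ℕ} {c R : ℤ} (hcR : c + 2 ≤ R) (hRm : R ≤ m + 1)
    (hmn : m ≤ n) : IsProfile m n c c (flipProfile n c R) := by
  refine ⟨by omega, by simp [flipProfile], by simp only [flipProfile]; split_ifs <;> omega, ?_⟩
  intro x hx y hy hxy
  simp only [Set.mem_Icc] at hx hy
  simp only [flipProfile]
  split_ifs <;> omega

-- Path `i : Fin r` runs from `(i + 1, n)` to `(m, i + 1)`.
abbrev IsDeltaFacet (m n r : ℕ) (C : Fin r → Finset (ℤ × ℤ)) : Prop :=
  IsFacetDecomp m n r (fun i => (i : ℤ) + 1) (fun i => (i : ℤ) + 1) C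

namespace IsDeltaFacet

variable {m n r : ℕ} {C : Fin r → Finset (ℤ × ℤ)} (hF : IsDeltaFacet m n r C)
include hF

theorem path (i : Fin r) : IsPathE m n (C i) ((i : ℤ) + 1) ((i : ℤ) + 1) := hF.1 i

theorem disjoint {i j : Fin r} (hij : i ≠ j) : Disjoint (C i) (C j) := hF.2 i j hij

theorem r_le_m (i : Fin r) : r ≤ m := by
  have := i.isLt
  have := (hF.path ⟨r - 1, by omega⟩).bounds (hF.path _).start_mem
  simp only at this
  omega

theorem exists_mem_le_of_lt {i j : Fin r} (hij : i < j) {x y' : ℤ} (hx : (j : ℤ) + 1 ≤ x)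
    (hv' : (x, y') ∈ C j) : ∃ y ≤ y', (x, y) ∈ C i := by
  have hP := hF.path i
  have hP' := hF.path j
  induction x, (hP'.bounds hv').2.1 using Int.leInductionDown generalizing y' with
  | base =>
    have := hP'.bounds hv'
    exact ⟨(i : ℤ) + 1, by simp only [Fin.lt_def] at hij; omega, hP.start_mem⟩
  | pred x hxm ih =>
    obtain ⟨y₀', hy₀', hm₀', hm₁'⟩ := hP'.exists_entry (by omega) hv'
    obtain ⟨y₀, hy₀, hm₀⟩ := ih (by omega) (by simpa using hm₁')
    obtain ⟨y₁, hy₁, hm₁, hm₂⟩ :=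
      hP.exists_exit (by simp only [Fin.lt_def] at hij; omega) hm₀
    refine ⟨y₁, ?_, hm₂⟩
    by_contra! hlt
    have := hP.mem_row_of_mem_of_mem hm₀ hm₁ hy₀ (by omega : y₀' ≤ y₁)
    exact disjoint_left.1 (hF.disjoint hij.ne) this (by simpa using hm₁')

theorem snd_lt_of_lt {i j : Fin r} (hij : i < j) {x y y' : ℤ} (hx : (j : ℤ) + 1 ≤ x)
    (hv : (x, y) ∈ C i) (hv' : (x, y') ∈ C j) : y < y' := by
  obtain ⟨y₀, hy₀, hm₀⟩ := hF.exists_mem_le_of_lt hij hx hv'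
  by_contra! hle
  have := (hF.path i).mem_row_of_mem_of_mem hm₀ hv hy₀ hle
  exact disjoint_left.1 (hF.disjoint hij.ne) this hv'

theorem fst_le_of_snd_ge {i : Fin r} {x y : ℤ} (hv : (x, y) ∈ C i) (hy : (i : ℤ) + 2 ≤ y) :
    x ≤ m - r + i + 1 := by
  have hrm := hF.r_le_m i
  induction hk : r - 1 - (i : ℕ) generalizing i x y with
  | zero => have := (hF.path i).bounds hv; omega
  | succ k ih =>
    obtain ⟨i', hi'⟩ : ∃ i' : Fin r, (i' : ℕ) = i + 1 := ⟨⟨i + 1, by omega⟩, rfl⟩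
    have hii' : i < i' := by rw [Fin.lt_def]; omega
    have hP' := hF.path i'
    rcases le_or_gt x ((i : ℤ) + 1) with hxi | hxi
    · omega
    have hxm : x < m := by
      refine lt_of_le_of_ne ((hF.path i).bounds hv).2.1 fun hxm => ?_
      have := hF.snd_lt_of_lt hii' (by omega) hv (hxm ▸ hP'.start_mem)
      omega
    obtain ⟨y₁, hy₁⟩ := hP'.exists_mem_row (x := x) (by omega) hxm.le
    obtain ⟨y₀, -, hm₀, hm₁⟩ := hP'.exists_entry hxm hy₁
    have := hF.snd_lt_of_lt hii' (by omega) hv hm₀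
    have := ih hm₁ (by omega) (by omega)
    omega

theorem card_pathCorners_le (i : Fin r) : (pathCorners (C i)).card ≤ m - r := by
  have hP := hF.path i
  have hrm := hF.r_le_m i
  have hinj : Set.InjOn Prod.fst (pathCorners (C i) : Set (ℤ × ℤ)) := by
    rintro ⟨x, y⟩ hc ⟨x', y'⟩ hc' (rfl : x = x')
    rw [hP.corner_snd_eq hc hc']
  have hsub : (pathCorners (C i)).image Prod.fst ⊆ Icc ((i : ℤ) + 2) (m - r + i + 1) := by
    simp only [subset_iff, mem_image, mem_Icc]
    rintro _ ⟨⟨x, y⟩, hc, rfl⟩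
    have := hP.corner_bounds hc
    have := hF.fst_le_of_snd_ge (pathCorners_subset _ hc) (by omega)
    exact ⟨by omega, this⟩
  have := card_le_card hsub
  rw [card_image_of_injOn hinj, Int.card_Icc] at this
  omega

theorem card_cornersOf : (cornersOf C).card = ∑ i, (pathCorners (C i)).card :=
  card_biUnion fun _ _ _ _ hij =>
    (hF.disjoint hij).mono (pathCorners_subset _) (pathCorners_subset _)

theorem card_cornersOf_le : (cornersOf C).card ≤ r * (m - r) := by
  rw [hF.card_cornersOf]
  calc ∑ i, (pathCorners (C i)).card ≤ ∑ _i : Fin r, (m - r) :=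
        sum_le_sum fun i _ => hF.card_pathCorners_le i
    _ = r * (m - r) := by simp

theorem update {i : Fin r} {P : Finset (ℤ × ℤ)}
    (hP : IsPathE m n P ((i : ℤ) + 1) ((i : ℤ) + 1))
    (hdisj : ∀ j, j ≠ i → Disjoint P (C j)) : IsDeltaFacet m n r (Function.update C i P) := by
  refine ⟨fun j => ?_, fun j k hjk => ?_⟩
  · rcases eq_or_ne j i with rfl | hj
    · simpa using hP
    · simpa [hj] using hF.path j
  · rcases eq_or_ne j i with rfl | hj
    · simpa [hjk.symm] using hdisj k hjk.symm
    rcases eq_or_ne k i with rfl | hk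
    · simpa [hj] using (hdisj j hj).symm
    simpa [hj, hk] using hF.disjoint hjk

theorem exists_free_rows (hrm : r + 1 ≤ m) {i : Fin r} (hi : pathCorners (C i) = ∅)
    (hgt : ∀ j, i < j → pathCorners (C j) ≠ ∅) :
    ∃ R : ℤ, (i : ℤ) + 3 ≤ R ∧ R ≤ m + 1 ∧
      ∀ x, (i : ℤ) + 2 ≤ x → x < R → ∀ j, j ≠ i → (x, (i : ℤ) + 2) ∉ C j := by
  have hbelow (x : ℤ) (hx : (i : ℤ) + 2 ≤ x) (hxm : x ≤ m) (j : Fin r) (hji : j < i) :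
      (x, (i : ℤ) + 2) ∉ C j := fun hv => by
    have := hF.snd_lt_of_lt hji (by omega) hv
      ((hF.path i).mem_col_of_pathCorners_eq_empty hi (by omega) hxm)
    omega
  by_cases hlast : (i : ℕ) + 1 = r
  · refine ⟨m + 1, by omega, le_rfl, fun x hx hxR j hji => ?_⟩
    exact hbelow x hx (by omega) j (lt_of_le_of_ne (Fin.le_def.2 (by omega)) hji)
  obtain ⟨i', hi'⟩ : ∃ i' : Fin r, (i' : ℕ) = i + 1 := ⟨⟨i + 1, by omega⟩, rfl⟩
  have hii' : i < i' := by rw [Fin.lt_def]; omega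
  obtain ⟨⟨xc, yc⟩, hc⟩ := nonempty_iff_ne_empty.2 (hgt i' hii')
  have hcb := (hF.path i').corner_bounds hc
  -- above the corner `(xc, yc)`, path `i + 1` stays right of column `i + 2`
  refine ⟨xc, by omega, by omega, fun x hx hxR j hji hv => ?_⟩
  rcases lt_trichotomy j i with hlt | rfl | hgt'
  · exact hbelow x hx (by omega) j hlt hv
  · exact hji rfl
  have hb := (hF.path j).bounds hv
  rcases eq_or_ne j i' with rfl | hne
  · have := (hF.path _).snd_le_of_fst_lt hv (pathCorners_subset _ hc) hxR
    omega
  · have : (i' : ℕ) < j :=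
      lt_of_le_of_ne (by rw [Fin.lt_def] at hgt'; omega) (Fin.val_ne_of_ne hne.symm)
    omega

theorem not_nonFlippable_of_maximal_hook (hrm : r + 1 ≤ m) (hmn : m ≤ n) {i : Fin r}
    (hi : pathCorners (C i) = ∅) (hgt : ∀ j, i < j → pathCorners (C j) ≠ ∅) :
    ¬ NonFlippable m n r (fun i => (i : ℤ) + 1) (fun i => (i : ℤ) + 1) C := by
  obtain ⟨R, hR, hRm, hfree⟩ := hF.exists_free_rows hrm hi hgt
  have hw := isProfile_flipProfile (m := m) (c := (i : ℤ) + 1) (by omega) hRm hmn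
  set P := profilePath m n ((i : ℤ) + 1) ((i : ℤ) + 1) (flipProfile n ((i : ℤ) + 1) R)
  have hP {x y : ℤ} (hv : (x, y) ∈ P) :
      (x, y) ∈ C i ∨ ((i : ℤ) + 2 ≤ x ∧ x < R ∧ y = (i : ℤ) + 2) := by
    rw [hw.mem_iff] at hv
    simp only [flipProfile] at hv
    rw [(hF.path i).mem_iff_of_pathCorners_eq_empty hi]
    split_ifs at hv <;> omega
  have hF' := hF.update hw.isPathE fun j hj => disjoint_left.2 fun ⟨x, y⟩ hv hv' => by
    rcases hP hv with hv | ⟨hx, hxR, rfl⟩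
    · exact disjoint_left.1 (hF.disjoint hj.symm) hv hv'
    · exact hfree x hx hxR j hj hv'
  intro hNF
  have hunion := hNF _ hF' (cornersOf_subset_update hi P)
  have hnew : (R - 1, (i : ℤ) + 2) ∈ univ.biUnion (Function.update C i P) := by
    refine mem_biUnion.2 ⟨i, mem_univ _, ?_⟩
    rw [Function.update_self, hw.mem_iff]
    simp only [flipProfile]
    split_ifs <;> omega
  rw [hunion, mem_biUnion] at hnew
  obtain ⟨j, -, hj⟩ := hnew
  rcases eq_or_ne j i with rfl | hji
  · rw [(hF.path j).mem_iff_of_pathCorners_eq_empty hi] at hj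
    omega
  · exact hfree _ (by omega) (by omega) j hji hj

theorem pathCorners_nonempty_of_nonFlippable (hrm : r + 1 ≤ m) (hmn : m ≤ n)
    (hNF : NonFlippable m n r (fun i => (i : ℤ) + 1) (fun i => (i : ℤ) + 1) C) (i : Fin r) :
    (pathCorners (C i)).Nonempty := by
  by_contra! hi₀
  obtain ⟨i, hi, hmax⟩ := exists_max_image (univ.filter fun i => pathCorners (C i) = ∅) id
    ⟨i, by simpa using hi₀⟩
  refine hF.not_nonFlippable_of_maximal_hook hrm hmn (by simpa using hi) (fun j hij hj => ?_) hNF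
  exact (hmax j (by simpa using hj)).not_gt hij

theorem le_card_cornersOf_of_nonFlippable (hrm : r + 1 ≤ m) (hmn : m ≤ n)
    (hNF : NonFlippable m n r (fun i => (i : ℤ) + 1) (fun i => (i : ℤ) + 1) C) :
    r ≤ (cornersOf C).card := by
  rw [hF.card_cornersOf]
  calc r = ∑ _i : Fin r, 1 := by simp
    _ ≤ ∑ i, (pathCorners (C i)).card :=
      sum_le_sum fun i _ => card_pos.2 (hF.pathCorners_nonempty_of_nonFlippable hrm hmn hNF i)

end IsDeltaFacet

-- The `a`-th model path climbs column `a` to row `m - r + a`, makes `s` corners on the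
-- antidiagonal `x + y = n - r + a + (m - r + a + 1 - s)` and climbs column `n - r + a`.
def modelProfile (m n r : ℕ) (a s : ℤ) (x : ℤ) : ℤ :=
  if x ≤ a then n
  else if x ≤ m - r + a + 1 - s then n - r + a
  else if x ≤ m - r + a then n - r + a + (m - r + a + 1 - s) - x
  else a

theorem modelProfile_cases (m n r : ℕ) (a s x : ℤ) :
    (x ≤ a ∧ modelProfile m n r a s x = n) ∨
    (a < x ∧ x ≤ m - r + a + 1 - s ∧ modelProfile m n r a s x = n - r + a) ∨
    (m - r + a + 1 - s < x ∧ x ≤ m - r + a ∧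
      modelProfile m n r a s x = n - r + a + (m - r + a + 1 - s) - x) ∨
    (m - r + a < x ∧ modelProfile m n r a s x = a) := by
  unfold modelProfile
  split_ifs <;> omega

noncomputable def modelPath (m n r : ℕ) (a s : ℤ) : Finset (ℤ × ℤ) :=
  profilePath m n a a (modelProfile m n r a s)

section ModelPath

variable {m n r : ℕ} {a s : ℤ} (har : a ≤ r) (hmn : m ≤ n)
  (hs : 1 ≤ s) (hsr : s ≤ m - r)
include har hmn hs hsr

theorem isProfile_modelProfile : IsProfile m n a a (modelProfile m n r a s) := by
  refine ⟨by omega, ?_, ?_, fun x hx y hy hxy => ?_⟩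
  · have := modelProfile_cases m n r a s a; omega
  · have := modelProfile_cases m n r a s (m + 1); omega
  · have := modelProfile_cases m n r a s x
    have := modelProfile_cases m n r a s y
    omega

theorem isPathE_modelPath : IsPathE m n (modelPath m n r a s) a a :=
  (isProfile_modelProfile har hmn hs hsr).isPathE

theorem mem_modelPath {x y : ℤ} : (x, y) ∈ modelPath m n r a s ↔
    a ≤ x ∧ x ≤ m ∧ modelProfile m n r a s (x + 1) ≤ y ∧
      y ≤ modelProfile m n r a s x :=
  (isProfile_modelProfile har hmn hs hsr).mem_iff

theorem mem_pathCorners_modelPath {x y : ℤ} : (x, y) ∈ pathCorners (modelPath m n r a s) ↔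
    m - r + a + 1 - s ≤ x ∧ x ≤ m - r + a ∧ y = n - r + a + (m - r + a + 1 - s) - x := by
  rw [mem_pathCorners, mem_modelPath har hmn hs hsr, mem_modelPath har hmn hs hsr,
    mem_modelPath har hmn hs hsr, sub_add_cancel]
  have := modelProfile_cases m n r a s (x - 1)
  have := modelProfile_cases m n r a s x
  have := modelProfile_cases m n r a s (x + 1)
  omega

theorem card_pathCorners_modelPath : (pathCorners (modelPath m n r a s)).card = s.toNat := by
  have : pathCorners (modelPath m n r a s) = (Icc (m - r + a + 1 - s) (m - r + a)).image
      fun x => (x, n - r + a + (m - r + a + 1 - s) - x) := by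
    ext ⟨x, y⟩
    simp only [mem_pathCorners_modelPath har hmn hs hsr, mem_image, mem_Icc,
      Prod.mk.injEq]
    constructor
    · rintro ⟨h₁, h₂, rfl⟩
      exact ⟨x, ⟨h₁, h₂⟩, rfl, rfl⟩
    · rintro ⟨x, hx, rfl, rfl⟩
      exact ⟨hx.1, hx.2, rfl⟩
  rw [this, card_image_of_injOn (fun x _ x' _ h => (Prod.ext_iff.1 h).1), Int.card_Icc]
  omega

end ModelPath

theorem disjoint_modelPath {m n r : ℕ} {a a' s s' : ℤ} (haa' : a < a')
    (ha'r : a' ≤ r) (hmn : m ≤ n) (hs : 1 ≤ s) (hsr : s ≤ m - r)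
    (hs' : 1 ≤ s') (hss' : s' ≤ s) :
    Disjoint (modelPath m n r a s) (modelPath m n r a' s') := by
  rw [disjoint_left]
  rintro ⟨x, y⟩ hv hv'
  rw [mem_modelPath (by omega) hmn hs hsr] at hv
  rw [mem_modelPath ha'r hmn hs' (by omega)] at hv'
  have := modelProfile_cases m n r a s x
  have := modelProfile_cases m n r a s (x + 1)
  have := modelProfile_cases m n r a' s' x
  have := modelProfile_cases m n r a' s' (x + 1)
  omega

noncomputable def modelFacet (m n r : ℕ) (s : ℕ → ℕ) (i : Fin r) : Finset (ℤ × ℤ) :=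
  modelPath m n r ((i : ℤ) + 1) (s i)

section ModelFacet

variable {m n r : ℕ} {s : ℕ → ℕ} (hmn : m ≤ n) (hs : ∀ k, 1 ≤ s k ∧ s k ≤ m - r)
include hmn hs

theorem isPathE_modelFacet (i : Fin r) :
    IsPathE m n (modelFacet m n r s i) ((i : ℤ) + 1) ((i : ℤ) + 1) := by
  have := hs i; have := i.isLt
  exact isPathE_modelPath (by omega) hmn (by omega) (by omega)

theorem mem_modelFacet (i : Fin r) {x y : ℤ} : (x, y) ∈ modelFacet m n r s i ↔
    (i : ℤ) + 1 ≤ x ∧ x ≤ m ∧ modelProfile m n r ((i : ℤ) + 1) (s i) (x + 1) ≤ y ∧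
      y ≤ modelProfile m n r ((i : ℤ) + 1) (s i) x := by
  have := hs i; have := i.isLt
  exact mem_modelPath (by omega) hmn (by omega) (by omega)

theorem mem_pathCorners_modelFacet (i : Fin r) {x y : ℤ} :
    (x, y) ∈ pathCorners (modelFacet m n r s i) ↔
      m - r + i + 2 - s i ≤ x ∧ x ≤ m - r + i + 1 ∧
        y = n - r + i + 1 + (m - r + i + 2 - s i) - x := by
  have := hs i; have := i.isLt
  rw [modelFacet, mem_pathCorners_modelPath (by omega) hmn (by omega) (by omega)]
  constructor <;> rintro ⟨h₁, h₂, h₃⟩ <;> refine ⟨by omega, by omega, by omega⟩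

theorem card_pathCorners_modelFacet (i : Fin r) :
    (pathCorners (modelFacet m n r s i)).card = s i := by
  have := hs i; have := i.isLt
  rw [modelFacet, card_pathCorners_modelPath (by omega) hmn (by omega) (by omega),
    Int.toNat_natCast]

variable (hanti : Antitone s)
include hanti

theorem isDeltaFacet_modelFacet : IsDeltaFacet m n r (modelFacet m n r s) := by
  refine ⟨isPathE_modelFacet hmn hs, fun i j hij => ?_⟩
  have hdisj {i j : Fin r} (hij : i < j) :
      Disjoint (modelFacet m n r s i) (modelFacet m n r s j) := by
    have := hs i; have := hs j; have := j.isLt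
    have := hanti (Fin.le_def.1 hij.le)
    exact disjoint_modelPath (by simp only [Fin.lt_def] at hij; omega) (by omega) hmn (by omega)
      (by omega) (by omega) (by omega)
  rcases lt_or_gt_of_ne hij with h | h
  · exact hdisj h
  · exact (hdisj h).symm

theorem card_cornersOf_modelFacet : (cornersOf (modelFacet m n r s)).card = ∑ i : Fin r, s i := by
  rw [(isDeltaFacet_modelFacet hmn hs hanti).card_cornersOf]
  exact sum_congr rfl fun i _ => card_pathCorners_modelFacet hmn hs i

end ModelFacet

theorem exists_gt_mem_modelFacet {m n r : ℕ} {s : ℕ → ℕ} (hmn : m ≤ n)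
    (hs : ∀ k, 1 ≤ s k ∧ s k ≤ m - r) (hanti : Antitone s) {i : Fin r} {x y : ℤ}
    (hx : (i : ℤ) + 2 ≤ x) (hxD : x < m - r + i + 2 - s i) (hy : n - r + i + 1 < y)
    (hyn : y ≤ n) : ∃ j, i < j ∧ (x, y) ∈ modelFacet m n r s j := by
  obtain ⟨j, hj⟩ : ∃ j : Fin r, (j : ℤ) + 1 = min (y - n + r) x :=
    ⟨⟨(min (y - n + r) x - 1).toNat, by omega⟩, by simp only; omega⟩
  have hij : i < j := by rw [Fin.lt_def]; omega
  have := hanti hij.le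
  have := hs i; have := hs j
  refine ⟨j, hij, (mem_modelFacet hmn hs j).2 ?_⟩
  have := modelProfile_cases m n r ((j : ℤ) + 1) (s j) x
  have := modelProfile_cases m n r ((j : ℤ) + 1) (s j) (x + 1)
  omega

section Rigidity

variable {m n r : ℕ} {s : ℕ → ℕ} (hmn : m ≤ n) (hs : ∀ k, 1 ≤ s k ∧ s k ≤ m - r)
  (hanti : Antitone s) {C : Fin r → Finset (ℤ × ℤ)} (hF : IsDeltaFacet m n r C)
  (hsub : cornersOf (modelFacet m n r s) ⊆ cornersOf C) {i : Fin r}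
  (hgt : ∀ j, i < j → C j = modelFacet m n r s j)
include hmn hs hanti hF hsub hgt

omit hF in
theorem exists_le_mem_pathCorners {v : ℤ × ℤ} (hv : v ∈ pathCorners (modelFacet m n r s i)) :
    ∃ j ≤ i, v ∈ pathCorners (C j) := by
  have hv' : v ∈ cornersOf C := hsub (mem_biUnion.2 ⟨i, mem_univ _, hv⟩)
  obtain ⟨j, -, hj⟩ := mem_biUnion.1 hv'
  refine ⟨j, not_lt.1 fun hij => ?_, hj⟩
  rw [hgt j hij] at hj
  exact disjoint_left.1 ((isDeltaFacet_modelFacet hmn hs hanti).disjoint (ne_of_lt hij))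
    (pathCorners_subset _ hv) (pathCorners_subset _ hj)

theorem pathCorners_modelFacet_subset :
    pathCorners (modelFacet m n r s i) ⊆ pathCorners (C i) := by
  rintro ⟨x, y⟩ hv
  have hK := (mem_pathCorners_modelFacet hmn hs i).1 hv
  -- the lowest corner fits on no earlier path; each higher one shares a cell with path `i`
  induction x, hK.2.1 using Int.leInductionDown generalizing y with
  | base =>
    obtain ⟨j, hji, hj⟩ := exists_le_mem_pathCorners hmn hs hanti hsub hgt hv
    obtain rfl : j = i := le_antisymm hji <| not_lt.1 fun hlt => by
      have := (hF.path j).corner_bounds hj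
      have := hF.fst_le_of_snd_ge (pathCorners_subset _ hj) (by omega)
      have := hs i
      simp only [Fin.lt_def] at hlt
      omega
    exact hj
  | pred x hx ih =>
    have hprev := ih (y - 1) ((mem_pathCorners_modelFacet hmn hs i).2 (by omega)) (by omega)
    obtain ⟨j, -, hj⟩ := exists_le_mem_pathCorners hmn hs hanti hsub hgt hv
    rcases eq_or_ne j i with rfl | hji
    · exact hj
    have h₁ := (mem_pathCorners.1 hprev).2.1
    have h₂ := (mem_pathCorners.1 hj).2.2
    exact absurd h₂ (disjoint_left.1 (hF.disjoint hji.symm) h₁)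

theorem mem_pathCorners_of_modelFacet (x : ℤ) (h₁ : m - r + i + 2 - s i ≤ x) (h₂ : x ≤ m - r + i + 1) :
    (x, (n : ℤ) - r + i + 1 + (m - r + i + 2 - s i) - x) ∈ pathCorners (C i) :=
  pathCorners_modelFacet_subset hmn hs hanti hF hsub hgt
    ((mem_pathCorners_modelFacet hmn hs i).2 ⟨h₁, h₂, rfl⟩)

theorem pathCorners_subset_modelFacet :
    pathCorners (C i) ⊆ pathCorners (modelFacet m n r s i) := by
  rintro ⟨x, y⟩ hc
  have hP := hF.path i
  have hcb := hP.corner_bounds hc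
  have hxK := hF.fst_le_of_snd_ge (pathCorners_subset _ hc) (by omega)
  have hsi := hs i
  have hmem := mem_pathCorners_of_modelFacet hmn hs hanti hF hsub hgt
  rcases le_or_gt (m - r + i + 2 - s i : ℤ) x with hxD | hxD
  · rw [hP.corner_snd_eq hc (hmem x hxD hxK), mem_pathCorners_modelFacet hmn hs i]
    exact ⟨hxD, hxK, rfl⟩
  · have htop := hmem _ le_rfl (by omega)
    rw [add_sub_cancel_right] at htop
    obtain ⟨j, hij, hj⟩ := exists_gt_mem_modelFacet hmn hs hanti (by omega) hxD
      (hP.corner_snd_lt_of_fst_lt htop hc hxD) hcb.2.2.2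
    rw [← hgt j hij] at hj
    exact absurd hj (disjoint_left.1 (hF.disjoint hij.ne) (pathCorners_subset _ hc))

theorem subset_modelFacet : C i ⊆ modelFacet m n r s i := by
  rintro ⟨x, y⟩ hv
  have hP := hF.path i
  have hb := hP.bounds hv
  have hsi := hs i
  have hmem := mem_pathCorners_of_modelFacet hmn hs hanti hF hsub hgt
  rw [mem_modelFacet hmn hs i]
  refine ⟨hb.1, hb.2.1, ?_, ?_⟩
  · rcases modelProfile_cases m n r ((i : ℤ) + 1) (s i) (x + 1) with h | h | h | h
    · omega
    · have := hP.corner_snd_le_of_fst_lt (hmem _ le_rfl (by omega)) hv (by omega)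
      omega
    · have := hP.corner_snd_le_of_fst_lt (hmem (x + 1) (by omega) (by omega)) hv (by omega)
      omega
    · omega
  · have := modelProfile_cases m n r ((i : ℤ) + 1) (s i) x
    by_contra! hlt
    obtain ⟨xc, yc, hc, hxc, hyc⟩ := hP.exists_corner_ge hv (by omega) (by omega)
    have := (mem_pathCorners_modelFacet hmn hs i).1
      (pathCorners_subset_modelFacet hmn hs hanti hF hsub hgt hc)
    omega

theorem eq_modelFacet_of_forall_gt : C i = modelFacet m n r s i :=
  (hF.path i).eq_of_subset (isPathE_modelFacet hmn hs i)
    (subset_modelFacet hmn hs hanti hF hsub hgt)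

end Rigidity

theorem nonFlippable_modelFacet {m n r : ℕ} {s : ℕ → ℕ} (hmn : m ≤ n)
    (hs : ∀ k, 1 ≤ s k ∧ s k ≤ m - r) (hanti : Antitone s) :
    NonFlippable m n r (fun i => (i : ℤ) + 1) (fun i => (i : ℤ) + 1) (modelFacet m n r s) := by
  intro C hF hsub
  have (i : Fin r) : C i = modelFacet m n r s i := by
    induction i using WellFoundedGT.induction with
    | ind i IH => exact eq_modelFacet_of_forall_gt hmn hs hanti hF hsub IH
  rw [funext this]

theorem exists_antitone_sum_eq {r q t : ℕ} (hq : 1 ≤ q) (ht : r ≤ t) (ht' : t ≤ r * q) :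
    ∃ s : ℕ → ℕ, (∀ k, 1 ≤ s k ∧ s k ≤ q) ∧ Antitone s ∧
      ∑ i : Fin r, s i = t := by
  -- `1 + ⌊(t - r) / r⌋` for every path, one more for the first `(t - r) mod r` of them
  rcases Nat.eq_zero_or_pos r with rfl | hr
  · refine ⟨fun _ => 1, fun _ => ⟨le_rfl, hq⟩, fun _ _ _ => le_rfl, ?_⟩
    simp only [Nat.zero_mul, nonpos_iff_eq_zero] at ht'
    simp [ht']
  obtain ⟨d, rfl⟩ := Nat.exists_eq_add_of_le ht
  obtain ⟨u, v, hv, rfl⟩ : ∃ u v, v < r ∧ d = r * u + v :=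
    ⟨d / r, d % r, Nat.mod_lt d hr, (Nat.div_add_mod d r).symm⟩
  have hu : u + 1 ≤ q ∧ (0 < v → u + 2 ≤ q) := by
    constructor
    · by_contra! h
      have := Nat.mul_le_mul_left r (Nat.le_of_lt_succ h)
      omega
    · intro hv0
      by_contra! h
      have := Nat.mul_le_mul_left r (Nat.le_of_lt_succ h)
      rw [mul_add] at this
      omega
  refine ⟨fun k => 1 + u + if k < v then 1 else 0, fun k => ?_, fun k l hkl => ?_, ?_⟩
  · dsimp only
    split_ifs <;> omega
  · dsimp only
    split_ifs <;> omega
  · rw [Fin.sum_univ_eq_sum_range (fun k => 1 + u + if k < v then 1 else 0),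
      sum_add_distrib, sum_boole, sum_const, card_range,
      show (range r).filter (· < v) = range v by ext; simp only [mem_filter, mem_range]; omega]
    simp only [card_range, smul_eq_mul, Nat.cast_id, mul_add]
    omega

/-- For `1 ≤ r ≤ m-1 ≤ n-1`, there exists a non-flippable facet of `Δ_r` (the complex
of the initial ideal of the `(r+1)`-minors of a generic `m × n` matrix, i.e.
`σ = [1,…,r | 1,…,r]`) with exactly `t` corners if and only if `r ≤ t ≤ r(m-r)`. -/
theorem nonflippable_facet_corner_count (m n r t : ℕ) (hr : 1 ≤ r) (hrm : r ≤ m - 1)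
    (hmn : m ≤ n) :
    (∃ C : Fin r → Finset (ℤ × ℤ),
      IsFacetDecomp m n r (fun i => (i : ℤ) + 1) (fun i => (i : ℤ) + 1) C ∧
      NonFlippable m n r (fun i => (i : ℤ) + 1) (fun i => (i : ℤ) + 1) C ∧
      (cornersOf C).card = t) ↔ (r ≤ t ∧ t ≤ r * (m - r)) := by
  have hrm' : r + 1 ≤ m := by omega
  constructor
  · rintro ⟨C, hF : IsDeltaFacet m n r C, hNF, rfl⟩
    exact ⟨hF.le_card_cornersOf_of_nonFlippable hrm' hmn hNF, hF.card_cornersOf_le⟩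
  · rintro ⟨ht, ht'⟩
    obtain ⟨s, hs, hanti, hsum⟩ := exists_antitone_sum_eq (by omega : 1 ≤ m - r) ht ht'
    exact ⟨modelFacet m n r s, isDeltaFacet_modelFacet hmn hs hanti,
      nonFlippable_modelFacet hmn hs hanti, by rw [card_cornersOf_modelFacet hmn hs hanti, hsum]⟩
end

section
/- Let $X$ be an $m\times n$ matrix of indeterminates ($m\leq n$), $I_{m-1}^*$ the initial ideal of its maximal minors with respect to the diagonal order, and $Y$ a dual $(n-m+1)\times n$ matrix of $X$ (meaning $Y_{i,j+i-1} = X_{j,j+i-1}$ for $1\leq i\leq n-m+1$, $1\leq j\leq m$), with $J_{n-m}^*$ the initial ideal of the maximal minors of $Y$. Then in the polynomial ring $T$ containing all variables of $X$ and $Y$, the Alexander dual satisfies $(I_{m-1}^*)^\vee T = J_{n-m}^* T$. -/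
open Finset

section AlexDual

variable {W : Type*} [DecidableEq W] (K : Type*) [Field K]

/-- `S` is a vertex cover of the family `𝒢`: every member of `𝒢` meets `S`. -/
def IsVertexCover (S : Finset W) (𝒢 : Set (Finset W)) : Prop :=
  ∀ G ∈ 𝒢, ∃ v ∈ S, v ∈ G

/-- The Alexander dual of the squarefree monomial ideal with generating supports `𝒢`:
the ideal generated by the squarefree monomials whose supports are vertex covers
of `𝒢`. -/
noncomputable def alexanderDual (𝒢 : Set (Finset W)) : Ideal (MvPolynomial W K) :=
  Ideal.span { g | ∃ S : Finset W, IsVertexCover S 𝒢 ∧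
    g = ∏ v ∈ S, MvPolynomial.X v }

end AlexDual

/-- The variables of the ambient polynomial ring `T`: the entries of the `m × n`
matrix `X` together with the fresh entries of its dual `(n-m+1) × n` matrix `Y`. -/
abbrev DualVars (m n : ℕ) := (Fin m × Fin n) ⊕ (Fin (n - m + 1) × Fin n)

/-- The `(i, c)` entry (0-indexed) of the dual matrix `Y` of `X`: it equals
`X_{c-i, c}` on the diagonal band (`Y_{i,j+i-1} = X_{j,j+i-1}` in 1-indexed terms), and
is a fresh indeterminate otherwise. -/
def Yent (m n : ℕ) (i : Fin (n - m + 1)) (c : Fin n) : DualVars m n :=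
  if h : (i : ℕ) ≤ (c : ℕ) ∧ (c : ℕ) < (i : ℕ) + m then
    Sum.inl (⟨(c : ℕ) - (i : ℕ), by omega⟩, c) else Sum.inr (i, c)

/-- The supports of the minimal generators of the initial ideal `I_{m-1}^*` of the
maximal minors of `X` with respect to the diagonal order: the main diagonals
`{(1,j₁),…,(m,j_m)}`, `j₁ < ⋯ < j_m`, of the maximal minors. -/
def diagSupportsX (m n : ℕ) : Set (Finset (DualVars m n)) :=
  { S | ∃ f : Fin m → Fin n, StrictMono f ∧
      S = Finset.univ.image (fun j => (Sum.inl (j, f j) : DualVars m n)) }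

/-!
Index the variable `X_{r,c}` of the band `r ≤ c ≤ r + (n - m)` by the cell `(r, c - r)` of an
`m × (n - m + 1)` grid. A main diagonal of `X` (a strictly increasing `f : Fin m → Fin n`) is then a
weakly increasing choice `t r = f r - r` of one column per row, and a main diagonal of `Y` (whose
entries all lie in `X`) a weakly increasing choice `s i = g i - i` of one row per column.
A row path and a column path always share a cell, namely at a fixed point of `s ∘ t`, so every
`Y`-diagonal is a vertex cover of the `X`-diagonals. Conversely, if a set of cells meets every row
path, the greedy lowest column path inside it cannot get stuck: otherwise the cells skipped by the
greedy steps contain a row path missing the set. So every vertex cover contains a `Y`-diagonal.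
-/

section AlexanderDual

variable {W : Type*} {K : Type*} [Field K]

open MvPolynomial in
theorem alexanderDual_eq_span_of_isVertexCover {𝒢 𝒯 : Set (Finset W)}
    (h_cover : ∀ T ∈ 𝒯, IsVertexCover T 𝒢)
    (h_min : ∀ S, IsVertexCover S 𝒢 → ∃ T ∈ 𝒯, T ⊆ S) :
    alexanderDual K 𝒢 = Ideal.span ((fun T => ∏ v ∈ T, X v) '' 𝒯) := by
  apply le_antisymm
  · rw [alexanderDual, Ideal.span_le]
    rintro _ ⟨S, hS, rfl⟩
    obtain ⟨T, hT, hTS⟩ := h_min S hS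
    exact Ideal.mem_of_dvd _ (prod_dvd_prod_of_subset T S _ hTS)
      (Ideal.subset_span ⟨T, hT, rfl⟩)
  · rw [Ideal.span_le]
    rintro _ ⟨T, hT, rfl⟩
    exact Ideal.subset_span ⟨T, h_cover T hT, rfl⟩

end AlexanderDual

theorem StrictMono.fin_val_add_sub_le {a b : ℕ} {f : Fin a → Fin b} (hf : StrictMono f)
    {i j : Fin a} (hij : i ≤ j) : (f i : ℕ) + (j - i) ≤ f j := by
  have h := card_le_card_of_injOn f (s := Icc i j) (t := Icc (f i) (f j))
    (fun k hk => by
      obtain ⟨hik, hkj⟩ := mem_Icc.mp hk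
      exact mem_Icc.mpr ⟨hf.monotone hik, hf.monotone hkj⟩)
    hf.injective.injOn
  rw [Fin.card_Icc, Fin.card_Icc] at h
  have : (f i : ℕ) ≤ f j := hf.monotone hij
  omega

theorem StrictMono.exists_monotone_offset {a b c : ℕ} (habc : a + c = b + 1)
    {f : Fin a → Fin b} (hf : StrictMono f) :
    ∃ t : Fin a → Fin c, Monotone t ∧ ∀ j, (f j : ℕ) = j + t j := by
  have spread {i j : Fin a} (hij : i ≤ j) := hf.fin_val_add_sub_le hij
  have lower (j : Fin a) : (j : ℕ) ≤ f j := by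
    have := j.isLt
    have := spread (show (⟨0, by omega⟩ : Fin a) ≤ j from Nat.zero_le _)
    simp only at this
    omega
  have upper (j : Fin a) : (f j : ℕ) - j < c := by
    have := j.isLt
    have := spread (show j ≤ ⟨a - 1, by omega⟩ from Nat.le_sub_one_of_lt j.isLt)
    simp only at this
    have := (f ⟨a - 1, by omega⟩).isLt
    have := lower j
    omega
  refine ⟨fun j => ⟨f j - j, upper j⟩, fun i j hij => ?_, fun j => ?_⟩
  · have := spread hij
    have := lower i
    show (f i : ℕ) - i ≤ f j - j
    omega
  · have := lower j
    show (f j : ℕ) = j + (f j - j)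
    omega

theorem Monotone.exists_strictMono_add {a b c : ℕ} (habc : a + c = b + 1)
    {t : Fin a → Fin c} (ht : Monotone t) :
    ∃ f : Fin a → Fin b, StrictMono f ∧ ∀ j, (f j : ℕ) = j + t j := by
  refine ⟨fun j => ⟨j + t j, by have := j.isLt; have := (t j).isLt; omega⟩,
    fun i j hij => ?_, fun _ => rfl⟩
  have : (t i : ℕ) ≤ t j := ht hij.le
  show (i : ℕ) + t i < j + t j
  have : (i : ℕ) < j := hij
  omega

section LowestPath

variable (P : ℕ → ℕ → Prop) (m : ℕ)

open Classical

/-- The row of the path in column `i` is `lowestPath P m (i + 1)`: the least `r ≥ lowestPath P m i`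
with `P r i`, or `m` if there is none. -/
noncomputable def lowestPath : ℕ → ℕ
  | 0 => 0
  | i + 1 => Nat.find (p := fun r => lowestPath i ≤ r ∧ (P r i ∨ m ≤ r))
      ⟨max (lowestPath i) m, le_max_left _ _, Or.inr (le_max_right _ _)⟩

theorem lowestPath_succ_spec (i : ℕ) : lowestPath P m i ≤ lowestPath P m (i + 1) ∧
    (P (lowestPath P m (i + 1)) i ∨ m ≤ lowestPath P m (i + 1)) :=
  Nat.find_spec (p := fun r => lowestPath P m i ≤ r ∧ (P r i ∨ m ≤ r)) _

theorem not_of_lowestPath_le_of_lt {i r : ℕ} (h_ge : lowestPath P m i ≤ r)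
    (h_lt : r < lowestPath P m (i + 1)) : ¬ P r i :=
  fun hP => Nat.find_min _ h_lt ⟨h_ge, Or.inl hP⟩

theorem monotone_lowestPath : Monotone (lowestPath P m) :=
  monotone_nat_of_le_succ fun i => (lowestPath_succ_spec P m i).1

end LowestPath

theorem exists_monotone_path_or_blocking {m d : ℕ} (P : Fin m → Fin (d + 1) → Prop) :
    (∃ s : Fin (d + 1) → Fin m, Monotone s ∧ ∀ i, P (s i) i) ∨
      ∃ t : Fin m → Fin (d + 1), Monotone t ∧ ∀ j, ¬ P j (t j) := by
  classical
  let Q : ℕ → ℕ → Prop := fun r i => ∃ (hr : r < m) (hi : i < d + 1), P ⟨r, hr⟩ ⟨i, hi⟩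
  set σ := lowestPath Q m
  have hσ : Monotone σ := monotone_lowestPath Q m
  by_cases h_low : σ (d + 1) < m
  · have hlt (i : Fin (d + 1)) : σ (i + 1) < m := (hσ (by omega)).trans_lt h_low
    refine .inl ⟨fun i => ⟨σ (i + 1), hlt i⟩, fun i i' h => hσ (Nat.add_le_add_right h 1),
      fun i => ?_⟩
    obtain ⟨_, _, hP⟩ := ((lowestPath_succ_spec Q m i).2).resolve_right (hlt i).not_ge
    exact hP
  -- The path reaches height `m`; row `j` is blocked in the first column where the path rises
  -- above `j`, since there the greedy step skipped the cell `(j, t j)`.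
  · have hex (j : ℕ) : ∃ i, j < σ (i + 1) ∨ d ≤ i := ⟨d, .inr le_rfl⟩
    have hτ (j : ℕ) : Nat.find (hex j) ≤ d := Nat.find_min' _ (.inr le_rfl)
    refine .inr ⟨fun j => ⟨Nat.find (hex j), Nat.lt_succ_of_le (hτ j)⟩,
      fun j j' h => Fin.mk_le_mk.mpr
        (Nat.find_mono fun i => Or.imp_left (lt_of_le_of_lt (α := ℕ) h)),
      fun j hP => ?_⟩
    have above : (j : ℕ) < σ (Nat.find (hex j) + 1) := by
      refine (Nat.find_spec (hex j)).elim id fun hd => ?_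
      rw [le_antisymm (hτ j) hd]
      omega
    have below : σ (Nat.find (hex j)) ≤ j := by
      cases hk : Nat.find (hex j) with
      | zero => exact Nat.zero_le _
      | succ k =>
        exact not_lt.mp (not_or.mp (Nat.find_min (hex j) (show k < Nat.find (hex j) by omega))).1
    exact not_of_lowestPath_le_of_lt Q m below above ⟨j.isLt, _, hP⟩

section DualMatrix

variable {m n : ℕ}

theorem Yent_eq_inl {i : Fin (n - m + 1)} {c : Fin n} {j : Fin m} (h : (c : ℕ) = i + j) :
    Yent m n i c = Sum.inl (j, c) := by
  rw [Yent, dif_pos ⟨by omega, by omega⟩]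
  congr
  omega

theorem elim_snd_Yent (i : Fin (n - m + 1)) (c : Fin n) :
    (Yent m n i c).elim Prod.snd Prod.snd = c := by
  unfold Yent
  split <;> rfl

theorem injective_Yent_comp {g : Fin (n - m + 1) → Fin n} (hg : Function.Injective g) :
    Function.Injective fun i => Yent m n i (g i) := fun i i' h =>
  hg (by simpa only [elim_snd_Yent] using congrArg (Sum.elim Prod.snd Prod.snd) h)

def diagSupportsY (m n : ℕ) : Set (Finset (DualVars m n)) :=
  { T | ∃ g : Fin (n - m + 1) → Fin n, StrictMono g ∧
      T = univ.image fun i => Yent m n i (g i) }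

theorem exists_Yent_eq_inl_of_strictMono (hm : 1 ≤ m) (hmn : m ≤ n)
    {f : Fin m → Fin n} (hf : StrictMono f) {g : Fin (n - m + 1) → Fin n} (hg : StrictMono g) :
    ∃ i j, Yent m n i (g i) = Sum.inl (j, f j) := by
  obtain ⟨t, ht, hft⟩ := hf.exists_monotone_offset (c := n - m + 1) (by omega)
  obtain ⟨s, hs, hgs⟩ := hg.exists_monotone_offset (c := m) (by omega)
  have : NeZero m := ⟨by omega⟩
  -- Both diagonals are monotone paths in the grid of cells `(row, column - row)`; they cross
  -- at a fixed point of `s ∘ t` (Tarski, on the complete lattice `Fin m`).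
  obtain ⟨j, hj⟩ : ∃ j, s (t j) = j := ⟨_, OrderHom.isFixedPt_lfp ⟨s ∘ t, hs.comp ht⟩⟩
  have hcross : g (t j) = f j := Fin.ext (by rw [hgs, hft, hj, Nat.add_comm])
  exact ⟨t j, j, by rw [Yent_eq_inl (by rw [hgs, hj]), hcross]⟩

theorem isVertexCover_of_mem_diagSupportsY (hm : 1 ≤ m) (hmn : m ≤ n)
    {T : Finset (DualVars m n)} (hT : T ∈ diagSupportsY m n) :
    IsVertexCover T (diagSupportsX m n) := by
  obtain ⟨g, hg, rfl⟩ := hT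
  rintro _ ⟨f, hf, rfl⟩
  obtain ⟨i, j, h⟩ := exists_Yent_eq_inl_of_strictMono hm hmn hf hg
  exact ⟨_, mem_image_of_mem _ (mem_univ i), h ▸ mem_image_of_mem _ (mem_univ j)⟩

theorem exists_mem_diagSupportsY_subset (hmn : m ≤ n) {S : Finset (DualVars m n)}
    (hS : IsVertexCover S (diagSupportsX m n)) : ∃ T ∈ diagSupportsY m n, T ⊆ S := by
  rcases exists_monotone_path_or_blocking (d := n - m)
      (fun j i => ∃ c : Fin n, (c : ℕ) = i + j ∧ Sum.inl (j, c) ∈ S) with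
    ⟨s, hs, hsS⟩ | ⟨t, ht, htS⟩
  · obtain ⟨g, hg, hgs⟩ := hs.exists_strictMono_add (b := n) (by omega)
    refine ⟨_, ⟨g, hg, rfl⟩, fun v hv => ?_⟩
    obtain ⟨i, -, rfl⟩ := mem_image.mp hv
    obtain ⟨c, hc, hcS⟩ := hsS i
    rwa [Yent_eq_inl (hgs i), show g i = c from Fin.ext ((hgs i).trans hc.symm)]
  · obtain ⟨f, hf, hft⟩ := ht.exists_strictMono_add (b := n) (by omega)
    obtain ⟨v, hvS, hv⟩ := hS _ ⟨f, hf, rfl⟩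
    obtain ⟨j, -, rfl⟩ := mem_image.mp hv
    exact absurd ⟨f j, by rw [hft, Nat.add_comm], hvS⟩ (htS j)

end DualMatrix

open MvPolynomial in
/-- **Alexander duality for initial ideals of maximal minors.** Let `I_{m-1}^*` be the
initial ideal (generated by the main diagonal monomials) of the maximal minors of the
generic `m × n` matrix `X` (`m ≤ n`), and `J_{n-m}^*` the initial ideal of the maximal
minors of a dual `(n-m+1) × n` matrix `Y` of `X`. Then, in the polynomial ring `T` on
all the variables of `X` and `Y`, `(I_{m-1}^*)^∨ T = J_{n-m}^* T`. -/
theorem alexander_dual_of_initial_maximal_minors (K : Type*) [Field K] (m n : ℕ)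
    (hm : 1 ≤ m) (hmn : m ≤ n) :
    alexanderDual K (diagSupportsX m n) =
      Ideal.span { g : MvPolynomial (DualVars m n) K |
        ∃ gfun : Fin (n - m + 1) → Fin n, StrictMono gfun ∧
          g = ∏ i, X (Yent m n i (gfun i)) } := by
  rw [alexanderDual_eq_span_of_isVertexCover (𝒯 := diagSupportsY m n)
    (fun _ => isVertexCover_of_mem_diagSupportsY hm hmn)
    (fun _ => exists_mem_diagSupportsY_subset hmn)]
  have prod_image_Yent {g : Fin (n - m + 1) → Fin n} (hg : StrictMono g) :
      ∏ v ∈ univ.image (fun i => Yent m n i (g i)), (X v : MvPolynomial _ K) =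
        ∏ i, X (Yent m n i (g i)) :=
    prod_image fun _ _ _ _ h => injective_Yent_comp hg.injective h
  congr 1
  ext p
  constructor
  · rintro ⟨_, ⟨g, hg, rfl⟩, rfl⟩
    exact ⟨g, hg, prod_image_Yent hg⟩
  · rintro ⟨g, hg, rfl⟩
    exact ⟨_, ⟨g, hg, rfl⟩, prod_image_Yent hg⟩
end
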